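/- arXiv:2601.15148 — 7 statements merged into one kernel-verified Lean document; each statement's English description precedes it below -/
import Mathlib

section
/- For every interval scheduling game with c colors, val(OPT) equals the maximum, over all nonnegative reals L_1,…,L_c with L_1 + ⋯ + L_c ≤ T, of the sum over colors i of the total weight of jobs j of color i with p_j ≤ L_i; moreover this maximum is attained. -/
open Classical

/-- An interval scheduling game: jobs `Fin n`, colors `Fin c`, horizon `[0, T)`,
and for each job a color, a length and a weight. -/
structure Game where
  n : ℕ
  c : ℕ
  T : ℝ
  T_pos : 0 < T
  color : Fin n → Fin c
  len : Fin n → ℝ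
  wt : Fin n → ℝ
  len_nonneg : ∀ j, 0 ≤ len j
  len_le_T : ∀ j, len j ≤ T
  wt_nonneg : ∀ j, 0 ≤ wt j

/-- A strategy profile assigns a feasible start time to every job, so that job `j`
occupies `[start j, start j + len j) ⊆ [0, T)`. -/
structure Game.Profile (G : Game) where
  start : Fin G.n → ℝ
  start_nonneg : ∀ j, 0 ≤ start j
  start_le : ∀ j, start j + G.len j ≤ G.T

/-- A machine configuration assigns a color to every time point. -/
abbrev Game.Config (G : Game) : Type := ℝ → Fin G.c

/-- Job `j` is covered if the machine is configured to its color throughout its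
processing interval `[start j, start j + len j)`. -/
def Game.Covered (G : Game) (s : G.Profile) (γ : G.Config) (j : Fin G.n) : Prop :=
  ∀ t : ℝ, s.start j ≤ t → t < s.start j + G.len j → γ t = G.color j

/-- The profit of a configuration: total weight of covered jobs. -/
noncomputable def Game.profit (G : Game) (s : G.Profile) (γ : G.Config) : ℝ :=
  ∑ j : Fin G.n, if G.Covered s γ j then G.wt j else 0

/-- The value of a profile: the maximal profit over machine configurations. -/
noncomputable def Game.val (G : Game) (s : G.Profile) : ℝ :=
  sSup {x : ℝ | ∃ γ : G.Config, x = G.profit s γ}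

/-- The social optimum value: the maximal value over strategy profiles. -/
noncomputable def Game.valOPT (G : Game) : ℝ :=
  sSup {x : ℝ | ∃ s : G.Profile, x = G.val s}

/-- A tie-breaking rule selects, for every profile, a configuration of maximal profit. -/
structure Game.TieBreak (G : Game) where
  choice : G.Profile → G.Config
  choice_opt : ∀ s : G.Profile, G.profit s (choice s) = G.val s

/-- Utility of player `i` under tie-breaking rule `M`: total weight of covered jobs
of color `i`. -/
noncomputable def Game.utility (G : Game) (M : G.TieBreak) (i : Fin G.c) (s : G.Profile) : ℝ :=
  ∑ j : Fin G.n, if G.color j = i ∧ G.Covered s (M.choice s) j then G.wt j else 0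

/-- Nash equilibrium with respect to tie-breaking rule `M`: no player can strictly
increase its utility by relocating only the jobs of its own color. -/
def Game.IsNE (G : Game) (M : G.TieBreak) (s : G.Profile) : Prop :=
  ∀ (i : Fin G.c) (s' : G.Profile),
    (∀ j, G.color j ≠ i → s'.start j = s.start j) →
      G.utility M i s' ≤ G.utility M i s

/-- The class `G_single`: exactly one job of each color (`n = c`). -/
def Game.Single (G : Game) : Prop := Function.Bijective G.color


namespace Game

variable (G : Game)

noncomputable def Sset : Set ℝ :=
  {x : ℝ | ∃ L : Fin G.c → ℝ,
      (∀ i, 0 ≤ L i) ∧ (∑ i, L i) ≤ G.T ∧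
      x = ∑ j : Fin G.n, if G.len j ≤ L (G.color j) then G.wt j else 0}

lemma Sset_finite : G.Sset.Finite := by
  apply Set.Finite.subset (Set.finite_range (fun A : Finset (Fin G.n) => ∑ j ∈ A, G.wt j))
  rintro x ⟨L, -, -, rfl⟩
  refine ⟨Finset.univ.filter (fun j => G.len j ≤ L (G.color j)), ?_⟩
  simp only []
  rw [Finset.sum_filter]

lemma Sset_nonempty : G.Sset.Nonempty :=
  ⟨_, 0, fun _ => le_rfl, by simpa using G.T_pos.le, rfl⟩

lemma Sset_nonneg : ∀ x ∈ G.Sset, 0 ≤ x := by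
  rintro x ⟨L, -, -, rfl⟩
  apply Finset.sum_nonneg
  intro j _
  split_ifs
  · exact G.wt_nonneg j
  · exact le_rfl

lemma profit_le_total (s : G.Profile) (γ : G.Config) : G.profit s γ ≤ ∑ j, G.wt j := by
  apply Finset.sum_le_sum
  intro j _
  split_ifs
  · exact le_rfl
  · exact G.wt_nonneg j

lemma val_le_total (s : G.Profile) : G.val s ≤ ∑ j, G.wt j := by
  apply Real.sSup_le
  · rintro x ⟨γ, rfl⟩; exact G.profit_le_total s γ
  · exact Finset.sum_nonneg fun j _ => G.wt_nonneg j

lemma valSet_bddAbove : BddAbove {x : ℝ | ∃ s : G.Profile, x = G.val s} :=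
  ⟨∑ j, G.wt j, by rintro x ⟨s, rfl⟩; exact G.val_le_total s⟩

noncomputable def defaultProfile : G.Profile :=
  ⟨fun _ => 0, fun _ => le_rfl, fun j => by simpa using G.len_le_T j⟩

/-- Every achievable profit is dominated by an element of `Sset`. -/
lemma exists_Sset_ge (s : G.Profile) (γ : G.Config) :
    ∃ x ∈ G.Sset, G.profit s γ ≤ x := by
  classical
  set F : Fin G.c → Finset (Fin G.n) :=
    fun i => Finset.univ.filter (fun j => G.color j = i ∧ G.Covered s γ j) with hF
  set L : Fin G.c → ℝ := fun i => if h : (F i).Nonempty then (F i).sup' h G.len else 0 with hLdef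
  have hL0 : ∀ i, 0 ≤ L i := by
    intro i
    by_cases h : (F i).Nonempty
    · simp only [hLdef, dif_pos h]
      obtain ⟨j, hj⟩ := h
      exact (G.len_nonneg j).trans (Finset.le_sup' _ hj)
    · simp only [hLdef, dif_neg h]; exact le_rfl
  have hcovL : ∀ j, G.Covered s γ j → G.len j ≤ L (G.color j) := by
    intro j hj
    have hjF : j ∈ F (G.color j) := by simp [hF, hj]
    have hne : (F (G.color j)).Nonempty := ⟨j, hjF⟩
    simp only [hLdef, dif_pos hne]
    exact Finset.le_sup' _ hjF
  have hwit : ∀ i, (F i).Nonempty → ∃ j ∈ F i, L i = G.len j := by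
    intro i h
    obtain ⟨j, hj, hje⟩ := Finset.exists_mem_eq_sup' h G.len
    exact ⟨j, hj, by simp only [hLdef, dif_pos h]; exact hje⟩
  have hsum : (∑ i, L i) ≤ G.T := by
    set K : Fin G.c → Set ℝ :=
      fun i => ⋃ j ∈ F i, Set.Ico (s.start j) (s.start j + G.len j) with hK
    have hKmeas : ∀ i, MeasurableSet (K i) :=
      fun i => (F i).measurableSet_biUnion (fun j _ => measurableSet_Ico)
    have hKsub : ∀ i, K i ⊆ Set.Ico 0 G.T := by
      intro i t ht
      simp only [hK, Set.mem_iUnion, Set.mem_Ico] at ht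
      obtain ⟨j, hj, ht1, ht2⟩ := ht
      exact ⟨(s.start_nonneg j).trans ht1, ht2.trans_le (s.start_le j)⟩
    have hKdisj : (Set.univ : Set (Fin G.c)).PairwiseDisjoint K := by
      intro a _ b _ hab
      refine Set.disjoint_left.2 fun t hta htb => hab ?_
      simp only [hK, Set.mem_iUnion, Set.mem_Ico] at hta htb
      obtain ⟨ja, hja, h1a, h2a⟩ := hta
      obtain ⟨jb, hjb, h1b, h2b⟩ := htb
      simp only [hF, Finset.mem_filter, Finset.mem_univ, true_and] at hja hjb
      have ea : γ t = G.color ja := hja.2 t h1a h2a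
      have eb : γ t = G.color jb := hjb.2 t h1b h2b
      rw [← hja.1, ← ea, eb, hjb.1]
    have hvol : ∀ i, ENNReal.ofReal (L i) ≤ MeasureTheory.volume (K i) := by
      intro i
      by_cases h : (F i).Nonempty
      · obtain ⟨j, hj, hje⟩ := hwit i h
        have h1 : ENNReal.ofReal (L i)
            = MeasureTheory.volume (Set.Ico (s.start j) (s.start j + G.len j)) := by
          rw [Real.volume_Ico, add_sub_cancel_left, hje]
        rw [h1]
        refine MeasureTheory.measure_mono ?_
        simp only [hK]
        intro t ht
        exact Set.mem_biUnion hj ht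
      · simp only [hLdef, dif_neg h]; simp
    have key : ∑ i, ENNReal.ofReal (L i) ≤ ENNReal.ofReal G.T := by
      calc ∑ i, ENNReal.ofReal (L i) ≤ ∑ i, MeasureTheory.volume (K i) :=
            Finset.sum_le_sum fun i _ => hvol i
        _ = MeasureTheory.volume (⋃ i ∈ Finset.univ, K i) :=
            (MeasureTheory.measure_biUnion_finset (by simpa using hKdisj)
              (fun i _ => hKmeas i)).symm
        _ ≤ MeasureTheory.volume (Set.Ico 0 G.T) := by
            apply MeasureTheory.measure_mono
            intro t ht
            simp only [Set.mem_iUnion] at ht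
            obtain ⟨i, -, hti⟩ := ht
            exact hKsub i hti
        _ = ENNReal.ofReal G.T := by rw [Real.volume_Ico, sub_zero]
    rw [← ENNReal.ofReal_sum_of_nonneg (fun i _ => hL0 i)] at key
    exact (ENNReal.ofReal_le_ofReal_iff G.T_pos.le).1 key
  refine ⟨_, ⟨L, hL0, hsum, rfl⟩, ?_⟩
  unfold Game.profit
  apply Finset.sum_le_sum
  intro j _
  by_cases h : G.Covered s γ j
  · rw [if_pos h, if_pos (hcovL j h)]
  · rw [if_neg h]
    split_ifs
    · exact G.wt_nonneg j
    · exact le_rfl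

/-- Every element of `Sset` is at most `valOPT`. -/
lemma le_valOPT_of_mem_Sset (x : ℝ) (hx : x ∈ G.Sset) : x ≤ G.valOPT := by
  classical
  obtain ⟨L, hL0, hLT, rfl⟩ := hx
  by_cases hc : Nonempty (Fin G.c)
  · set o : Fin G.c → ℝ := fun i => ∑ k ∈ Finset.univ.filter (fun k => k < i), L k with ho
    have ho0 : ∀ i, 0 ≤ o i := fun i => Finset.sum_nonneg fun k _ => hL0 k
    have hoins : ∀ i : Fin G.c,
        o i + L i = ∑ k ∈ insert i (Finset.univ.filter (fun k => k < i)), L k := by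
      intro i
      rw [Finset.sum_insert (by simp)]
      ring
    have hoL : ∀ i, o i + L i ≤ ∑ k, L k := by
      intro i
      rw [hoins i]
      exact Finset.sum_le_sum_of_subset_of_nonneg (Finset.subset_univ _) (fun k _ _ => hL0 k)
    have hlt : ∀ a b : Fin G.c, a < b → o a + L a ≤ o b := by
      intro a b hab
      rw [hoins a, ho]
      apply Finset.sum_le_sum_of_subset_of_nonneg _ (fun k _ _ => hL0 k)
      intro k hk
      simp only [Finset.mem_insert, Finset.mem_filter, Finset.mem_univ, true_and] at hk ⊢
      rcases hk with rfl | hk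
      · exact hab
      · exact hk.trans hab
    have huniq : ∀ (t : ℝ) (a b : Fin G.c), o a ≤ t → t < o a + L a →
        o b ≤ t → t < o b + L b → a = b := by
      intro t a b ha1 ha2 hb1 hb2
      rcases lt_trichotomy a b with h | h | h
      · exact absurd hb1 (not_le.2 (ha2.trans_le (hlt a b h)))
      · exact h
      · exact absurd ha1 (not_le.2 (hb2.trans_le (hlt b a h)))
    obtain ⟨sp, hsp⟩ : ∃ sp : G.Profile,
        ∀ j, sp.start j = if G.len j ≤ L (G.color j) then o (G.color j) else 0 := by
      refine ⟨⟨fun j => if G.len j ≤ L (G.color j) then o (G.color j) else 0, ?_, ?_⟩,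
        fun j => rfl⟩
      · intro j
        split_ifs
        · exact ho0 _
        · exact le_rfl
      · intro j
        split_ifs with h
        · have := hoL (G.color j)
          have := hLT
          linarith
        · simpa using G.len_le_T j
    obtain ⟨γ, hγ⟩ : ∃ γ : G.Config, ∀ t (i : Fin G.c), o i ≤ t → t < o i + L i → γ t = i := by
      refine ⟨fun t => if h : ∃ i, o i ≤ t ∧ t < o i + L i then h.choose
        else Classical.choice hc, ?_⟩
      intro t i h1 h2
      have hex : ∃ i, o i ≤ t ∧ t < o i + L i := ⟨i, h1, h2⟩
      simp only [dif_pos hex]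
      exact huniq t _ _ hex.choose_spec.1 hex.choose_spec.2 h1 h2
    have hcov : ∀ j, G.len j ≤ L (G.color j) → G.Covered sp γ j := by
      intro j hj t ht1 ht2
      rw [hsp j, if_pos hj] at ht1 ht2
      exact hγ t _ ht1 (ht2.trans_le (by linarith))
    have h1 : (∑ j : Fin G.n, if G.len j ≤ L (G.color j) then G.wt j else 0)
        ≤ G.profit sp γ := by
      apply Finset.sum_le_sum
      intro j _
      by_cases h : G.len j ≤ L (G.color j)
      · rw [if_pos h, if_pos (hcov j h)]
      · rw [if_neg h]
        split_ifs
        · exact G.wt_nonneg j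
        · exact le_rfl
    have h2 : G.profit sp γ ≤ G.val sp :=
      le_csSup ⟨∑ j, G.wt j, by rintro x ⟨γ', rfl⟩; exact G.profit_le_total sp γ'⟩ ⟨γ, rfl⟩
    have h3 : G.val sp ≤ G.valOPT := le_csSup G.valSet_bddAbove ⟨sp, rfl⟩
    linarith
  · haveI hn : IsEmpty (Fin G.n) := ⟨fun j => hc ⟨G.color j⟩⟩
    have hx0 : (∑ j : Fin G.n, if G.len j ≤ L (G.color j) then G.wt j else 0) = 0 := by
      simp
    rw [hx0]
    have hval0 : G.val G.defaultProfile = 0 := by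
      unfold Game.val
      convert Real.sSup_empty using 2
      rw [Set.eq_empty_iff_forall_notMem]
      rintro x ⟨γ, -⟩
      exact hc ⟨γ 0⟩
    calc (0 : ℝ) = G.val G.defaultProfile := hval0.symm
      _ ≤ G.valOPT := le_csSup G.valSet_bddAbove ⟨_, rfl⟩

end Game

/-- `val(OPT)` equals the maximum, over nonnegative interval lengths `L i` per color
summing to at most `T`, of the total weight of jobs `j` with `len j ≤ L (color j)`;
moreover this maximum is attained. -/
theorem valOPT_eq_max_over_lengths (G : Game) :
    IsGreatest {x : ℝ | ∃ L : Fin G.c → ℝ,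
        (∀ i, 0 ≤ L i) ∧ (∑ i, L i) ≤ G.T ∧
        x = ∑ j : Fin G.n, if G.len j ≤ L (G.color j) then G.wt j else 0}
      G.valOPT := by
  show IsGreatest G.Sset G.valOPT
  have hfin := G.Sset_finite
  have hne := G.Sset_nonempty
  have hbdd := hfin.bddAbove
  have hA : G.valOPT ≤ sSup G.Sset := by
    have h0 : 0 ≤ sSup G.Sset := by
      obtain ⟨x, hx⟩ := hne
      exact (G.Sset_nonneg x hx).trans (le_csSup hbdd hx)
    apply Real.sSup_le _ h0
    rintro v ⟨s, rfl⟩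
    apply Real.sSup_le _ h0
    rintro v ⟨γ, rfl⟩
    obtain ⟨x, hxS, hle⟩ := G.exists_Sset_ge s γ
    exact hle.trans (le_csSup hbdd hxS)
  have hB : sSup G.Sset ≤ G.valOPT := G.le_valOPT_of_mem_Sset _ (hne.csSup_mem hfin)
  have heq : G.valOPT = sSup G.Sset := le_antisymm hA hB
  constructor
  · rw [heq]; exact hne.csSup_mem hfin
  · intro x hx
    rw [heq]
    exact le_csSup hbdd hx
end

section
/- For every game in G_single, val(OPT) equals the optimal value of the associated 0-1 knapsack problem, i.e., val(OPT) = max { Σ_{i∈A} w_i : A ⊆ {1,…,c}, Σ_{i∈A} p_i ≤ T }. -/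
open Classical

lemma profit_eq_sum_filter (G : Game) (s : G.Profile) (γ : G.Config) :
    G.profit s γ = ∑ j ∈ Finset.univ.filter (fun j => G.Covered s γ j), G.wt j :=
  (Finset.sum_filter _ _).symm

lemma covered_len_le (G : Game) (hsingle : G.Single) (s : G.Profile) (γ : G.Config) :
    ∑ j ∈ Finset.univ.filter (fun j => G.Covered s γ j), G.len j ≤ G.T := by
  set D := Finset.univ.filter (fun j => G.Covered s γ j) with hD
  have hdisj : (D : Set (Fin G.n)).PairwiseDisjoint
      (fun j => Set.Ico (s.start j) (s.start j + G.len j)) := by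
    intro j hj k hk hjk
    rw [Function.onFun, Set.disjoint_left]
    intro t htj htk
    apply hjk
    apply hsingle.injective
    have hcj : G.Covered s γ j := by simpa [hD] using hj
    have hck : G.Covered s γ k := by simpa [hD] using hk
    rw [← hcj t htj.1 htj.2, ← hck t htk.1 htk.2]
  have hmeas := MeasureTheory.measure_biUnion_finset (μ := MeasureTheory.volume) hdisj
    (fun j _ => measurableSet_Ico (a := s.start j) (b := s.start j + G.len j))
  have hsub : (⋃ j ∈ D, Set.Ico (s.start j) (s.start j + G.len j)) ⊆ Set.Ico 0 G.T := by
    intro t ht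
    simp only [Set.mem_iUnion] at ht
    obtain ⟨j, _, htj⟩ := ht
    exact ⟨le_trans (s.start_nonneg j) htj.1, lt_of_lt_of_le htj.2 (s.start_le j)⟩
  have h1 : ∑ j ∈ D, MeasureTheory.volume (Set.Ico (s.start j) (s.start j + G.len j))
      ≤ ENNReal.ofReal G.T := by
    rw [← hmeas]
    calc MeasureTheory.volume (⋃ j ∈ D, Set.Ico (s.start j) (s.start j + G.len j))
        ≤ MeasureTheory.volume (Set.Ico (0:ℝ) G.T) := MeasureTheory.measure_mono hsub
      _ = ENNReal.ofReal G.T := by rw [Real.volume_Ico]; ring_nf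
  have h2 : ENNReal.ofReal (∑ j ∈ D, G.len j) ≤ ENNReal.ofReal G.T := by
    rw [ENNReal.ofReal_sum_of_nonneg (fun j _ => G.len_nonneg j)]
    simpa [Real.volume_Ico] using h1
  exact (ENNReal.ofReal_le_ofReal_iff G.T_pos.le).mp h2

/-- For `G ∈ G_single`, `val(OPT)` equals the optimal value of the associated
0-1 knapsack problem. -/
theorem valOPT_eq_knapsack (G : Game) (hsingle : G.Single) :
    IsGreatest {x : ℝ | ∃ A : Finset (Fin G.n),
        (∑ j ∈ A, G.len j) ≤ G.T ∧ x = ∑ j ∈ A, G.wt j}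
      G.valOPT := by
  set S := {x : ℝ | ∃ A : Finset (Fin G.n),
      (∑ j ∈ A, G.len j) ≤ G.T ∧ x = ∑ j ∈ A, G.wt j} with hS
  have hF : ((Finset.univ : Finset (Finset (Fin G.n))).filter
      (fun A => ∑ j ∈ A, G.len j ≤ G.T)).Nonempty :=
    ⟨∅, by simp [G.T_pos.le]⟩
  obtain ⟨A₀, hA₀mem, hA₀max⟩ :=
    Finset.exists_max_image _ (fun A => ∑ j ∈ A, G.wt j) hF
  set K := ∑ j ∈ A₀, G.wt j with hK
  have hA₀T : ∑ j ∈ A₀, G.len j ≤ G.T := by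
    simpa using hA₀mem
  have hKmem : K ∈ S := ⟨A₀, hA₀T, rfl⟩
  have hKub : ∀ x ∈ S, x ≤ K := by
    rintro x ⟨A, hA, rfl⟩
    exact hA₀max A (by simpa using hA)
  have hK0 : 0 ≤ K := by
    have h0 : (0:ℝ) ∈ S := ⟨∅, by simpa using G.T_pos.le, by simp⟩
    exact hKub 0 h0
  have hprofit_le : ∀ (s : G.Profile) (γ : G.Config), G.profit s γ ≤ K := by
    intro s γ
    rw [profit_eq_sum_filter]
    exact hKub _ ⟨_, covered_len_le G hsingle s γ, rfl⟩
  have hval_le : ∀ s : G.Profile, G.val s ≤ K := fun s =>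
    Real.sSup_le (by rintro x ⟨γ, rfl⟩; exact hprofit_le s γ) hK0
  have hOPT_le : G.valOPT ≤ K :=
    Real.sSup_le (by rintro x ⟨s, rfl⟩; exact hval_le s) hK0
  have hvalbdd : BddAbove {x : ℝ | ∃ s : G.Profile, x = G.val s} :=
    ⟨K, by rintro x ⟨s, rfl⟩; exact hval_le s⟩
  have hK_le : K ≤ G.valOPT := by
    rcases A₀.eq_empty_or_nonempty with hAe | ⟨j₀, hj₀⟩
    · -- K = 0
      have hK0' : K = 0 := by rw [hK, hAe]; simp
      rw [hK0']
      have s₀ : G.Profile :=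
        ⟨fun _ => 0, fun _ => le_refl 0, fun j => by simpa using G.len_le_T j⟩
      have h1 : (0:ℝ) ≤ G.val s₀ := by
        apply Real.sSup_nonneg
        rintro x ⟨γ, rfl⟩
        exact Finset.sum_nonneg fun j _ => by
          split <;> [exact G.wt_nonneg j; exact le_refl 0]
      exact le_trans h1 (le_csSup hvalbdd ⟨s₀, rfl⟩)
    · -- construct profile scheduling A₀ back-to-back
      set st : Fin G.n → ℝ :=
        fun j => if j ∈ A₀ then ∑ k ∈ A₀.filter (fun k => k < j), G.len k else 0
        with hst
      have hst_nonneg : ∀ j, 0 ≤ st j := by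
        intro j
        by_cases hj : j ∈ A₀
        · simpa [hst, hj] using Finset.sum_nonneg fun k _ => G.len_nonneg k
        · simp [hst, hj]
      have hsubA : ∀ j ∈ A₀, insert j (A₀.filter (fun k => k < j)) ⊆ A₀ := by
        intro j hj m hm
        rcases Finset.mem_insert.mp hm with rfl | hm
        · exact hj
        · exact (Finset.mem_filter.mp hm).1
      have hst_add : ∀ j ∈ A₀, st j + G.len j = ∑ k ∈ insert j (A₀.filter (fun k => k < j)), G.len k := by
        intro j hj
        have hnot : j ∉ A₀.filter (fun k => k < j) := by simp
        rw [Finset.sum_insert hnot, hst]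
        simp [hj, add_comm]
      have hst_le : ∀ j ∈ A₀, st j + G.len j ≤ ∑ k ∈ A₀, G.len k := by
        intro j hj
        rw [hst_add j hj]
        exact Finset.sum_le_sum_of_subset_of_nonneg (hsubA j hj)
          (fun m _ _ => G.len_nonneg m)
      have hst_le_T : ∀ j, st j + G.len j ≤ G.T := by
        intro j
        by_cases hj : j ∈ A₀
        · exact le_trans (hst_le j hj) hA₀T
        · rw [hst]; simpa [hj] using G.len_le_T j
      have hmono : ∀ j ∈ A₀, ∀ k ∈ A₀, j < k → st j + G.len j ≤ st k := by
        intro j hj k hk hjk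
        rw [hst_add j hj]
        have hsub : insert j (A₀.filter (fun m => m < j)) ⊆ A₀.filter (fun m => m < k) := by
          intro m hm
          rcases Finset.mem_insert.mp hm with rfl | hm
          · exact Finset.mem_filter.mpr ⟨hj, hjk⟩
          · obtain ⟨hm1, hm2⟩ := Finset.mem_filter.mp hm
            exact Finset.mem_filter.mpr ⟨hm1, lt_trans hm2 hjk⟩
        have := Finset.sum_le_sum_of_subset_of_nonneg hsub
          (fun m _ _ => G.len_nonneg m)
        rw [hst]
        simpa [hk] using this
      have hdisj : ∀ j ∈ A₀, ∀ k ∈ A₀, j ≠ k → ∀ t : ℝ,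
          st j ≤ t → t < st j + G.len j → st k ≤ t → t < st k + G.len k → False := by
        intro j hj k hk hjk t h1 h2 h3 h4
        rcases hjk.lt_or_gt with h | h
        · exact absurd (lt_of_lt_of_le h2 (hmono j hj k hk h)) (not_lt.mpr h3)
        · exact absurd (lt_of_lt_of_le h4 (hmono k hk j hj h)) (not_lt.mpr h1)
      set sA : G.Profile := ⟨st, hst_nonneg, hst_le_T⟩ with hsA
      set γ : G.Config := fun t =>
        if h : ∃ j, j ∈ A₀ ∧ (st j ≤ t ∧ t < st j + G.len j) then G.color h.choose
        else G.color j₀ with hγ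
      have hcov : ∀ j ∈ A₀, G.Covered sA γ j := by
        intro j hj t ht1 ht2
        have ht1' : st j ≤ t := ht1
        have ht2' : t < st j + G.len j := ht2
        have hex : ∃ k, k ∈ A₀ ∧ (st k ≤ t ∧ t < st k + G.len k) := ⟨j, hj, ht1', ht2'⟩
        have hγt : γ t = G.color hex.choose := by rw [hγ]; exact dif_pos hex
        obtain ⟨hk1, hk2, hk3⟩ := hex.choose_spec
        by_cases hjk : hex.choose = j
        · rw [hγt, hjk]
        · exact (hdisj _ hk1 j hj hjk t hk2 hk3 ht1' ht2').elim
      have hKle_profit : K ≤ G.profit sA γ := by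
        rw [hK, Game.profit]
        rw [show ∑ j ∈ A₀, G.wt j = ∑ j : Fin G.n, if j ∈ A₀ then G.wt j else 0 by
          rw [Finset.sum_ite_mem]; simp]
        apply Finset.sum_le_sum
        intro j _
        by_cases hj : j ∈ A₀
        · simp [hj, hcov j hj]
        · simp only [hj, if_false]
          split <;> [exact G.wt_nonneg j; exact le_refl 0]
      have hbd : BddAbove {x : ℝ | ∃ γ' : G.Config, x = G.profit sA γ'} :=
        ⟨K, by rintro x ⟨γ', rfl⟩; exact hprofit_le sA γ'⟩
      have h1 : K ≤ G.val sA := le_trans hKle_profit (le_csSup hbd ⟨γ, rfl⟩)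
      exact le_trans h1 (le_csSup hvalbdd ⟨sA, rfl⟩)
  have heq : G.valOPT = K := le_antisymm hOPT_le hK_le
  rw [heq]
  exact ⟨hKmem, hKub⟩
end

section
/- Let G be a game in G_single with n ≤ 5 jobs. For every tie-breaking rule M and every Nash equilibrium σ with respect to M, val(OPT) ≤ 2·val(σ); that is, the price of anarchy of G is at most 2. -/
open Classical

/-!
Let `C` be the set of jobs covered at the equilibrium `s`, so `val s = w(C)`, and let `O` be the
set of jobs covered by any configuration `δ` for any profile `τ`. Since `w(O) = w(O ∩ C) + w(O \ C)`
and `val s = w(C ∩ O) + w(C \ O)`, it suffices to bound the weight of `O \ C` by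
`val s + w(C \ O)`.

The owner of an uncovered job `j` may move it to any window `[t, t + p_j)`. That this deviation is
not profitable forces the value of the new profile to stay at most `val s`; comparing with the
configuration that runs `j` in the window and otherwise follows the equilibrium shows that `w_j` is
at most the weight of the covered jobs whose intervals meet the window, and running `j` beside a
job `y` shows `w_j + w_y ≤ val s` as soon as `2 p_j + p_y ≤ T`. Since the jobs of `O` fit
disjointly into `[0, T)`, these two bounds settle each of the cases `|O \ C| ≤ 5 - |C|`.
-/

open MeasureTheory in
lemma sum_le_of_pairwiseDisjoint_Ico {ι : Type*} {S : Finset ι} {a ℓ : ι → ℝ} {u v : ℝ}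
    (huv : u ≤ v) (hℓ : ∀ i ∈ S, 0 ≤ ℓ i)
    (hd : (S : Set ι).PairwiseDisjoint fun i => Set.Ico (a i) (a i + ℓ i))
    (hS : ∀ i ∈ S, u ≤ a i ∧ a i + ℓ i ≤ v) :
    ∑ i ∈ S, ℓ i ≤ v - u :=
  calc ∑ i ∈ S, ℓ i = ∑ i ∈ S, volume.real (Set.Ico (a i) (a i + ℓ i)) :=
        Finset.sum_congr rfl fun i hi => by
          rw [Real.volume_real_Ico_of_le (by linarith [hℓ i hi])]; ring
    _ = volume.real (⋃ i ∈ S, Set.Ico (a i) (a i + ℓ i)) :=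
        (measureReal_biUnion_finset hd (fun _ _ => measurableSet_Ico)
          fun _ _ => measure_Ico_lt_top.ne).symm
    _ ≤ volume.real (Set.Ico u v) :=
        measureReal_mono (Set.iUnion₂_subset fun i hi =>
          Set.Ico_subset_Ico (hS i hi).1 (hS i hi).2) measure_Ico_lt_top.ne
    _ = v - u := Real.volume_real_Ico_of_le huv

namespace Game

variable {G : Game}

noncomputable def coveredSet (s : G.Profile) (γ : G.Config) : Finset (Fin G.n) :=
  Finset.univ.filter (G.Covered s γ)

noncomputable def TieBreak.coveredSet (M : G.TieBreak) (s : G.Profile) : Finset (Fin G.n) :=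
  G.coveredSet s (M.choice s)

def Meets (s : G.Profile) (k : Fin G.n) (t ℓ : ℝ) : Prop :=
  0 < G.len k ∧ t < s.start k + G.len k ∧ s.start k < t + ℓ

def Blocks (s : G.Profile) (S : Finset (Fin G.n)) (ℓ : ℝ) : Prop :=
  ∀ t, 0 ≤ t → t + ℓ ≤ G.T → ∃ k ∈ S, G.Meets s k t ℓ

noncomputable def missed (M : G.TieBreak) (s τ : G.Profile) (δ : G.Config) :
    Finset (Fin G.n) :=
  (G.coveredSet τ δ \ M.coveredSet s).filter (0 < G.wt ·)

def Profile.update (s : G.Profile) (j : Fin G.n) (t : ℝ) (h0 : 0 ≤ t)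
    (hT : t + G.len j ≤ G.T) : G.Profile where
  start := Function.update s.start j t
  start_nonneg k := by
    rcases eq_or_ne k j with rfl | hk
    · simpa using h0
    · simpa [hk] using s.start_nonneg k
  start_le k := by
    rcases eq_or_ne k j with rfl | hk
    · simpa using hT
    · simpa [hk] using s.start_le k

section Basic

variable {s : G.Profile} {γ : G.Config}

@[simp]
lemma mem_coveredSet {k : Fin G.n} : k ∈ G.coveredSet s γ ↔ G.Covered s γ k := by
  simp [coveredSet]

lemma profit_eq_sum_coveredSet : G.profit s γ = ∑ k ∈ G.coveredSet s γ, G.wt k := by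
  rw [coveredSet, Finset.sum_filter, profit]

lemma TieBreak.sum_wt_coveredSet (M : G.TieBreak) (s : G.Profile) :
    ∑ k ∈ M.coveredSet s, G.wt k = G.val s := by
  rw [TieBreak.coveredSet, ← profit_eq_sum_coveredSet, M.choice_opt]

lemma val_nonneg (M : G.TieBreak) (s : G.Profile) : 0 ≤ G.val s := by
  rw [← M.sum_wt_coveredSet]
  exact Finset.sum_nonneg fun k _ => G.wt_nonneg k

lemma sum_wt_le_profit {S : Finset (Fin G.n)} (hS : ∀ k ∈ S, G.Covered s γ k) :
    ∑ k ∈ S, G.wt k ≤ G.profit s γ := by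
  rw [profit_eq_sum_coveredSet]
  exact Finset.sum_le_sum_of_subset_of_nonneg (fun k hk => mem_coveredSet.2 (hS k hk))
    fun k _ _ => G.wt_nonneg k

lemma profit_le_val (s : G.Profile) (γ : G.Config) : G.profit s γ ≤ G.val s := by
  refine le_csSup ⟨∑ k, G.wt k, ?_⟩ ⟨γ, rfl⟩
  rintro x ⟨γ', rfl⟩
  rw [profit_eq_sum_coveredSet]
  exact Finset.sum_le_sum_of_subset_of_nonneg (Finset.subset_univ _)
    fun k _ _ => G.wt_nonneg k

lemma wt_le_val (s : G.Profile) (j : Fin G.n) : G.wt j ≤ G.val s := by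
  have := sum_wt_le_profit (s := s) (γ := fun _ => G.color j) (S := {j})
    (by simp [Covered])
  simpa using this.trans (profit_le_val _ _)

lemma covered_disjoint (hinj : Function.Injective G.color) {x y : Fin G.n}
    (hx : G.Covered s γ x) (hy : G.Covered s γ y) (hxy : x ≠ y) (hpx : 0 < G.len x)
    (hpy : 0 < G.len y) :
    s.start x + G.len x ≤ s.start y ∨ s.start y + G.len y ≤ s.start x := by
  by_contra! h
  have hx' := hx (max (s.start x) (s.start y)) (le_max_left _ _) (max_lt (by linarith) h.1)
  have hy' := hy (max (s.start x) (s.start y)) (le_max_right _ _) (max_lt h.2 (by linarith))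
  exact hxy (hinj (hx'.symm.trans hy'))

end Basic

lemma sum_len_le_T (hinj : Function.Injective G.color) {τ : G.Profile} {δ : G.Config}
    {S : Finset (Fin G.n)} (hS : S ⊆ G.coveredSet τ δ) :
    ∑ k ∈ S, G.len k ≤ G.T := by
  have hd : (S : Set (Fin G.n)).PairwiseDisjoint
      fun k => Set.Ico (τ.start k) (τ.start k + G.len k) := by
    intro x hx y hy hxy
    refine Set.disjoint_left.2 fun r ⟨h1, h2⟩ ⟨h3, h4⟩ => ?_
    rcases covered_disjoint hinj (mem_coveredSet.1 (hS hx)) (mem_coveredSet.1 (hS hy)) hxy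
      (by linarith) (by linarith) with h | h <;> linarith
  simpa using sum_le_of_pairwiseDisjoint_Ico G.T_pos.le (fun k _ => G.len_nonneg k) hd
    fun k _ => ⟨τ.start_nonneg k, τ.start_le k⟩

lemma len_add_len_add_len_le (hinj : Function.Injective G.color) {τ : G.Profile}
    {δ : G.Config} {x y z : Fin G.n}
    (hx : G.Covered τ δ x) (hy : G.Covered τ δ y) (hz : G.Covered τ δ z) (hxy : x ≠ y)
    (hxz : x ≠ z) (hyz : y ≠ z) : G.len x + G.len y + G.len z ≤ G.T := by
  have := sum_len_le_T hinj (τ := τ) (δ := δ) (S := {x, y, z})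
    (by simp [Finset.insert_subset_iff, *])
  rwa [Finset.sum_insert (by simp [*]), Finset.sum_pair hyz, ← add_assoc] at this

section Geometry

variable {s : G.Profile}

lemma lt_add_add_of_meets_of_meets {k : Fin G.n} {ℓ₁ ℓ₂ : ℝ} (h₁ : G.Meets s k 0 ℓ₁)
    (h₂ : G.Meets s k (G.T - ℓ₂) ℓ₂) : G.T < ℓ₁ + ℓ₂ + G.len k := by
  linarith [h₁.2.2, h₂.2.1]

lemma Blocks.sub_lt {S : Finset (Fin G.n)} {ℓ u v : ℝ} (h : G.Blocks s S ℓ) (hu : 0 ≤ u)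
    (hv : v ≤ G.T) (hS : ∀ k ∈ S, s.start k + G.len k ≤ u ∨ v ≤ s.start k) : v - u < ℓ := by
  by_contra! hℓ
  obtain ⟨k, hk, -, hk₁, hk₂⟩ := h u hu (by linarith)
  rcases hS k hk with h' | h' <;> linarith

/-- Two intervals leave three gaps in `[0, T)`, each shorter than a blocked length. -/
lemma Blocks.sub_len_sub_len_lt {S : Finset (Fin G.n)} {ℓ : ℝ} {b₁ b₂ : Fin G.n}
    (h : G.Blocks s S ℓ) (hS : ∀ k ∈ S, k = b₁ ∨ k = b₂)
    (hb : s.start b₁ + G.len b₁ ≤ s.start b₂ ∨ s.start b₂ + G.len b₂ ≤ s.start b₁) :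
    G.T - G.len b₁ - G.len b₂ < 3 * ℓ := by
  wlog hb' : s.start b₁ + G.len b₁ ≤ s.start b₂ generalizing b₁ b₂
  · have := this (fun k hk => (hS k hk).symm) hb.symm (hb.resolve_left hb')
    linarith
  have h₁ := s.start_nonneg b₁
  have h₂ := s.start_le b₂
  have := G.len_nonneg b₁
  have := G.len_nonneg b₂
  have outside : ∀ u v, (s.start b₁ + G.len b₁ ≤ u ∨ v ≤ s.start b₁) →
      (s.start b₂ + G.len b₂ ≤ u ∨ v ≤ s.start b₂) →
      ∀ k ∈ S, s.start k + G.len k ≤ u ∨ v ≤ s.start k := fun u v hu₁ hu₂ k hk => by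
    rcases hS k hk with rfl | rfl <;> assumption
  have g₀ := h.sub_lt le_rfl (by linarith)
    (outside 0 (s.start b₁) (.inr le_rfl) (.inr (by linarith)))
  have g₁ := h.sub_lt (by linarith) (by linarith)
    (outside (s.start b₁ + G.len b₁) (s.start b₂) (.inl le_rfl) (.inr le_rfl))
  have g₂ := h.sub_lt (by linarith) le_rfl
    (outside (s.start b₂ + G.len b₂) G.T (.inl (by linarith)) (.inl le_rfl))
  linarith

end Geometry

section Equilibrium

variable {M : G.TieBreak} {s : G.Profile}

@[simp]
lemma Profile.update_start_self {j : Fin G.n} {t : ℝ} {h0 : 0 ≤ t} {hT : t + G.len j ≤ G.T} :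
    (s.update j t h0 hT).start j = t := by
  simp [Profile.update]

lemma Profile.update_start_of_ne {j k : Fin G.n} {t : ℝ} {h0 : 0 ≤ t}
    {hT : t + G.len j ≤ G.T} (hk : k ≠ j) : (s.update j t h0 hT).start k = s.start k := by
  simp [Profile.update, hk]

lemma utility_color (hinj : Function.Injective G.color) (M : G.TieBreak) (s : G.Profile)
    (j : Fin G.n) :
    G.utility M (G.color j) s = if G.Covered s (M.choice s) j then G.wt j else 0 := by
  rw [utility, Finset.sum_eq_single j]
  · simp
  · exact fun k _ hk => if_neg fun h => hk (hinj h.1)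
  · simp

lemma profit_update_le {j : Fin G.n} {t : ℝ} {h0 : 0 ≤ t} {hT : t + G.len j ≤ G.T}
    {γ : G.Config} (hj : ¬ G.Covered (s.update j t h0 hT) γ j) :
    G.profit (s.update j t h0 hT) γ ≤ G.profit s γ := by
  refine Finset.sum_le_sum fun k _ => ?_
  rcases eq_or_ne k j with rfl | hk
  · rw [if_neg hj]
    split_ifs <;> simp [G.wt_nonneg]
  · have : G.Covered (s.update j t h0 hT) γ k ↔ G.Covered s γ k := by
      simp only [Covered, Profile.update_start_of_ne hk]
    simp only [this, le_refl]

/-- Moving an uncovered job of positive weight cannot raise the value: otherwise the tie-breaking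
rule would cover it in the new profile, a profitable deviation. -/
lemma profit_update_le_val (hinj : Function.Injective G.color) (hNE : G.IsNE M s)
    {j : Fin G.n} (hj : ¬ G.Covered s (M.choice s) j) (hw : 0 < G.wt j) {t : ℝ}
    (h0 : 0 ≤ t) (hT : t + G.len j ≤ G.T) (γ : G.Config) :
    G.profit (s.update j t h0 hT) γ ≤ G.val s := by
  set s' := s.update j t h0 hT
  have hdev := hNE (G.color j) s' fun k hk =>
    Profile.update_start_of_ne fun h : k = j => hk (congrArg G.color h)
  have hj' : ¬ G.Covered s' (M.choice s') j := by
    intro h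
    rw [utility_color hinj, utility_color hinj, if_pos h, if_neg hj] at hdev
    linarith
  calc G.profit s' γ ≤ G.val s' := profit_le_val _ _
    _ = G.profit s' (M.choice s') := (M.choice_opt s').symm
    _ ≤ G.profit s (M.choice s') := profit_update_le hj'
    _ ≤ G.val s := profit_le_val _ _

lemma wt_le_sum_meets (hinj : Function.Injective G.color) (hNE : G.IsNE M s)
    {j : Fin G.n} (hj : ¬ G.Covered s (M.choice s) j) {t : ℝ} (h0 : 0 ≤ t)
    (hT : t + G.len j ≤ G.T) :
    G.wt j ≤ ∑ k ∈ (M.coveredSet s).filter (G.Meets s · t (G.len j)), G.wt k := by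
  rcases (G.wt_nonneg j).eq_or_lt with hw | hw
  · rw [← hw]
    exact Finset.sum_nonneg fun k _ => G.wt_nonneg k
  set γ : G.Config := fun r => if r ∈ Set.Ico t (t + G.len j) then G.color j else M.choice s r
  have hcov : ∀ k ∈ insert j ((M.coveredSet s).filter (¬ G.Meets s · t (G.len j))),
      G.Covered (s.update j t h0 hT) γ k := by
    simp only [Finset.mem_insert, Finset.mem_filter, TieBreak.coveredSet, mem_coveredSet]
    rintro k (rfl | ⟨hk, hmeet⟩) r hr hr'
    · simp_all [γ]
    · have hkj : k ≠ j := by rintro rfl; exact hj hk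
      rw [Profile.update_start_of_ne hkj] at hr hr'
      have hr'' : r ∉ Set.Ico t (t + G.len j) := fun ⟨h₁, h₂⟩ =>
        hmeet ⟨by linarith, by linarith, by linarith⟩
      simp only [γ, if_neg hr'']
      exact hk r hr hr'
  have hj' : j ∉ (M.coveredSet s).filter (¬ G.Meets s · t (G.len j)) := by
    simp [TieBreak.coveredSet, hj]
  have := (sum_wt_le_profit hcov).trans (profit_update_le_val hinj hNE hj hw h0 hT γ)
  rw [Finset.sum_insert hj', ← M.sum_wt_coveredSet s,
    ← Finset.sum_filter_add_sum_filter_not (M.coveredSet s) (G.Meets s · t (G.len j))] at this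
  linarith

lemma wt_add_wt_le_val (hinj : Function.Injective G.color) (hNE : G.IsNE M s)
    {j y : Fin G.n} (hj : ¬ G.Covered s (M.choice s) j) (hyj : y ≠ j)
    (hlen : 2 * G.len j + G.len y ≤ G.T) : G.wt j + G.wt y ≤ G.val s := by
  rcases (G.wt_nonneg j).eq_or_lt with hw | hw
  · rw [← hw, zero_add]
    exact wt_le_val s y
  have := s.start_nonneg y
  have := G.len_nonneg y
  obtain ⟨t, h0, hT, hsep⟩ : ∃ t, 0 ≤ t ∧ t + G.len j ≤ G.T ∧
      (s.start y + G.len y ≤ t ∨ t + G.len j ≤ s.start y) := by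
    rcases le_or_gt (G.len j) (s.start y) with h | h
    · exact ⟨0, le_rfl, by linarith [G.len_le_T j], .inr (by linarith)⟩
    · exact ⟨s.start y + G.len y, by linarith, by linarith, .inl le_rfl⟩
  set γ : G.Config := fun r => if r ∈ Set.Ico t (t + G.len j) then G.color j else G.color y
  have hcov : ∀ k ∈ ({j, y} : Finset (Fin G.n)), G.Covered (s.update j t h0 hT) γ k := by
    simp only [Finset.mem_insert, Finset.mem_singleton]
    rintro k (rfl | rfl) r hr hr'
    · simp_all [γ]
    · rw [Profile.update_start_of_ne hyj] at hr hr'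
      have hr'' : r ∉ Set.Ico t (t + G.len j) := fun ⟨h₁, h₂⟩ => by
        rcases hsep with h | h <;> linarith
      simp only [γ, if_neg hr'']
  have := (sum_wt_le_profit hcov).trans (profit_update_le_val hinj hNE hj hw h0 hT γ)
  rwa [Finset.sum_pair hyj.symm] at this

lemma blocks_of_not_covered (hinj : Function.Injective G.color) (hNE : G.IsNE M s)
    {j : Fin G.n} (hj : ¬ G.Covered s (M.choice s) j) (hw : 0 < G.wt j) :
    G.Blocks s (M.coveredSet s) (G.len j) := by
  intro t h0 hT
  by_contra! h
  have := wt_le_sum_meets hinj hNE hj h0 hT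
  rw [Finset.filter_false_of_mem h, Finset.sum_empty] at this
  linarith

end Equilibrium

section Comparison

variable {M : G.TieBreak} {s τ : G.Profile} {δ : G.Config}

lemma mem_missed {j : Fin G.n} : j ∈ G.missed M s τ δ ↔
    G.Covered τ δ j ∧ ¬ G.Covered s (M.choice s) j ∧ 0 < G.wt j := by
  simp [missed, TieBreak.coveredSet, and_assoc]

lemma wt_le_sum_meets_add (hinj : Function.Injective G.color) (hNE : G.IsNE M s)
    {j : Fin G.n} (hj : ¬ G.Covered s (M.choice s) j) {t : ℝ} (h0 : 0 ≤ t)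
    (hT : t + G.len j ≤ G.T) :
    G.wt j ≤ ∑ k ∈ (M.coveredSet s ∩ G.coveredSet τ δ).filter (G.Meets s · t (G.len j)),
      G.wt k + ∑ k ∈ M.coveredSet s \ G.coveredSet τ δ, G.wt k := by
  calc G.wt j ≤ ∑ k ∈ (M.coveredSet s).filter (G.Meets s · t (G.len j)), G.wt k :=
        wt_le_sum_meets hinj hNE hj h0 hT
    _ = ∑ k ∈ (M.coveredSet s).filter (G.Meets s · t (G.len j)) ∩ G.coveredSet τ δ, G.wt k +
          ∑ k ∈ (M.coveredSet s).filter (G.Meets s · t (G.len j)) \ G.coveredSet τ δ, G.wt k :=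
        (Finset.sum_inter_add_sum_sdiff _ _ _).symm
    _ ≤ _ := by
      rw [Finset.filter_inter]
      gcongr with k
      · exact fun _ _ _ => G.wt_nonneg _
      · exact Finset.filter_subset _ _

lemma wt_le_of_not_blocks (hinj : Function.Injective G.color) (hNE : G.IsNE M s)
    {j : Fin G.n} (hj : ¬ G.Covered s (M.choice s) j)
    (hfree : ¬ G.Blocks s (M.coveredSet s ∩ G.coveredSet τ δ) (G.len j)) :
    G.wt j ≤ ∑ k ∈ M.coveredSet s \ G.coveredSet τ δ, G.wt k := by
  unfold Blocks at hfree
  push Not at hfree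
  obtain ⟨t, h0, hT, hnone⟩ := hfree
  simpa [Finset.filter_false_of_mem hnone] using
    wt_le_sum_meets_add (τ := τ) (δ := δ) hinj hNE hj h0 hT

lemma wt_add_wt_le_of_mem_missed (hinj : Function.Injective G.color) (hNE : G.IsNE M s)
    {x y : Fin G.n} (hx : x ∈ G.missed M s τ δ) (hy : y ∈ G.missed M s τ δ) (hxy : x ≠ y) :
    G.wt x + G.wt y ≤ G.val s + ∑ k ∈ M.coveredSet s \ G.coveredSet τ δ, G.wt k := by
  rw [mem_missed] at hx hy
  have hTx := G.len_le_T x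
  have hTy := G.len_le_T y
  -- `y` at the left end and `x` at the right end are blocked by disjoint sets of jobs
  have hy' := wt_le_sum_meets_add (τ := τ) (δ := δ) hinj hNE hy.2.1 le_rfl (by linarith)
  have hx' := wt_le_sum_meets_add (τ := τ) (δ := δ) hinj hNE hx.2.1 (t := G.T - G.len x)
    (by linarith) (by linarith)
  set H₀ := (M.coveredSet s ∩ G.coveredSet τ δ).filter (G.Meets s · 0 (G.len y))
  set H₁ := (M.coveredSet s ∩ G.coveredSet τ δ).filter (G.Meets s · (G.T - G.len x) (G.len x))
  have hdisj : Disjoint H₀ H₁ := by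
    refine Finset.disjoint_filter.2 fun k hk hk₀ hk₁ => ?_
    simp only [Finset.mem_inter, TieBreak.coveredSet, mem_coveredSet] at hk
    have := len_add_len_add_len_le hinj hy.1 hx.1 hk.2 (Ne.symm hxy)
      (fun h => hy.2.1 (h ▸ hk.1)) (fun h => hx.2.1 (h ▸ hk.1))
    linarith [lt_add_add_of_meets_of_meets hk₀ hk₁]
  have hsub : ∑ k ∈ H₀ ∪ H₁, G.wt k ≤ ∑ k ∈ M.coveredSet s ∩ G.coveredSet τ δ, G.wt k :=
    Finset.sum_le_sum_of_subset_of_nonneg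
      (Finset.union_subset (Finset.filter_subset _ _) (Finset.filter_subset _ _))
      fun k _ _ => G.wt_nonneg k
  rw [Finset.sum_union hdisj] at hsub
  rw [← M.sum_wt_coveredSet s,
    ← Finset.sum_inter_add_sum_sdiff (M.coveredSet s) (G.coveredSet τ δ)]
  linarith

lemma blocks_of_coveredSet_subset (hinj : Function.Injective G.color) (hNE : G.IsNE M s)
    {z : Fin G.n} (hz : z ∈ G.missed M s τ δ) (hsub : M.coveredSet s ⊆ G.coveredSet τ δ) :
    G.Blocks s (M.coveredSet s ∩ G.coveredSet τ δ) (G.len z) := by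
  rw [mem_missed] at hz
  by_contra hfree
  have := wt_le_of_not_blocks hinj hNE hz.2.1 hfree
  rw [Finset.sdiff_eq_empty_iff_subset.2 hsub, Finset.sum_empty] at this
  linarith [hz.2.2]

lemma not_blocks_or_not_blocks (hinj : Function.Injective G.color) (hNE : G.IsNE M s)
    {x y z : Fin G.n} (hx : x ∈ G.missed M s τ δ) (hy : y ∈ G.missed M s τ δ)
    (hz : z ∈ G.missed M s τ δ) (hxy : x ≠ y) (hxz : x ≠ z) (hyz : y ≠ z)
    (hC : (M.coveredSet s).card ≤ 2) :
    ¬ G.Blocks s (M.coveredSet s ∩ G.coveredSet τ δ) (G.len x) ∨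
      ¬ G.Blocks s (M.coveredSet s ∩ G.coveredSet τ δ) (G.len y) := by
  rw [← not_and_or]
  rintro ⟨hbx, hby⟩
  rw [mem_missed] at hx hy hz
  have hTx := G.len_le_T x
  have hTy := G.len_le_T y
  obtain ⟨b, hb, hbx₀⟩ := hbx 0 le_rfl (by linarith)
  obtain ⟨b', hb', hby₁⟩ := hby (G.T - G.len y) (by linarith) (by linarith)
  simp only [Finset.mem_inter, TieBreak.coveredSet, mem_coveredSet] at hb hb'
  have hne {j k : Fin G.n} (hj : ¬ G.Covered s (M.choice s) j)
      (hk : G.Covered s (M.choice s) k) : j ≠ k := fun h => hj (h ▸ hk)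
  rcases eq_or_ne b b' with rfl | hbb
  · have := len_add_len_add_len_le hinj hx.1 hy.1 hb.2 hxy (hne hx.2.1 hb.1) (hne hy.2.1 hb.1)
    linarith [lt_add_add_of_meets_of_meets hbx₀ hby₁]
  -- then `b, b'` are all the equilibrium covers, so `z` is blocked too, and each of `x, y, z`
  -- is longer than the three gaps around `b, b'`, overfilling `[0, T)`
  have hCov : M.coveredSet s = {b, b'} :=
    (Finset.eq_of_subset_of_card_le
      (by simp [Finset.insert_subset_iff, TieBreak.coveredSet, hb.1, hb'.1])
      (by rw [Finset.card_pair hbb]; exact hC)).symm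
  have hS : ∀ k ∈ M.coveredSet s ∩ G.coveredSet τ δ, k = b ∨ k = b' := fun k hk => by
    simpa [hCov] using (Finset.mem_inter.1 hk).1
  have hbz := blocks_of_coveredSet_subset hinj hNE (mem_missed.2 hz) (by
    simp [hCov, Finset.insert_subset_iff, hb.2, hb'.2])
  have hord := covered_disjoint hinj hb.1 hb'.1 hbb hbx₀.1 hby₁.1
  have h₁ := hbx.sub_len_sub_len_lt hS hord
  have h₂ := hby.sub_len_sub_len_lt hS hord
  have h₃ := hbz.sub_len_sub_len_lt hS hord
  have : x ≠ b ∧ x ≠ b' ∧ y ≠ b ∧ y ≠ b' ∧ z ≠ b ∧ z ≠ b' :=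
    ⟨hne hx.2.1 hb.1, hne hx.2.1 hb'.1, hne hy.2.1 hb.1, hne hy.2.1 hb'.1, hne hz.2.1 hb.1,
      hne hz.2.1 hb'.1⟩
  have hpack := sum_len_le_T hinj (τ := τ) (δ := δ) (S := {x, y, z, b, b'})
    (by simp [Finset.insert_subset_iff, hx.1, hy.1, hz.1, hb.2, hb'.2])
  rw [Finset.sum_insert (by simp [*]), Finset.sum_insert (by simp [*]),
    Finset.sum_insert (by simp [*]), Finset.sum_pair hbb] at hpack
  linarith

lemma sum_wt_three_le_of_not_blocks (hinj : Function.Injective G.color) (hNE : G.IsNE M s)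
    {x y z : Fin G.n} (hx : x ∈ G.missed M s τ δ) (hy : y ∈ G.missed M s τ δ)
    (hz : z ∈ G.missed M s τ δ) (hxy : x ≠ y) (hxz : x ≠ z) (hyz : y ≠ z)
    (hfx : ¬ G.Blocks s (M.coveredSet s ∩ G.coveredSet τ δ) (G.len x))
    (hfy : ¬ G.Blocks s (M.coveredSet s ∩ G.coveredSet τ δ) (G.len y)) :
    G.wt x + G.wt y + G.wt z ≤ G.val s + ∑ k ∈ M.coveredSet s \ G.coveredSet τ δ, G.wt k := by
  rw [mem_missed] at hx hy hz
  have hwx := wt_le_of_not_blocks hinj hNE hx.2.1 hfx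
  have hwy := wt_le_of_not_blocks hinj hNE hy.2.1 hfy
  have hpack := len_add_len_add_len_le hinj hx.1 hy.1 hz.1 hxy hxz hyz
  rcases le_or_gt (2 * G.len x + G.len z) G.T with h | h
  · linarith [wt_add_wt_le_val hinj hNE hx.2.1 hxz.symm h]
  · linarith [wt_add_wt_le_val hinj hNE hy.2.1 hyz.symm (by linarith)]

lemma sum_wt_three_le (hinj : Function.Injective G.color) (hNE : G.IsNE M s)
    {x y z : Fin G.n} (hx : x ∈ G.missed M s τ δ) (hy : y ∈ G.missed M s τ δ)
    (hz : z ∈ G.missed M s τ δ) (hxy : x ≠ y) (hxz : x ≠ z) (hyz : y ≠ z)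
    (hC : (M.coveredSet s).card ≤ 2) :
    G.wt x + G.wt y + G.wt z ≤ G.val s + ∑ k ∈ M.coveredSet s \ G.coveredSet τ δ, G.wt k := by
  rcases not_blocks_or_not_blocks hinj hNE hx hy hz hxy hxz hyz hC with hfx | hfy
  · rcases not_blocks_or_not_blocks hinj hNE hy hz hx hyz hxy.symm hxz.symm hC with hfy | hfz
    · exact sum_wt_three_le_of_not_blocks hinj hNE hx hy hz hxy hxz hyz hfx hfy
    · linarith [sum_wt_three_le_of_not_blocks hinj hNE hx hz hy hxz hxy hyz.symm hfx hfz]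
  · rcases not_blocks_or_not_blocks hinj hNE hx hz hy hxz hxy hyz.symm hC with hfx | hfz
    · exact sum_wt_three_le_of_not_blocks hinj hNE hx hy hz hxy hxz hyz hfx hfy
    · linarith [sum_wt_three_le_of_not_blocks hinj hNE hy hz hx hyz hxy.symm hxz.symm hfy hfz]

lemma sum_wt_four_le (hinj : Function.Injective G.color) (hNE : G.IsNE M s)
    {x y z w : Fin G.n} (hx : x ∈ G.missed M s τ δ) (hy : y ∈ G.missed M s τ δ)
    (hz : z ∈ G.missed M s τ δ) (hw : w ∈ G.missed M s τ δ) (hxy : x ≠ y) (hxz : x ≠ z)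
    (hxw : x ≠ w) (hyz : y ≠ z) (hyw : y ≠ w) (hzw : z ≠ w)
    (hC : (M.coveredSet s).card ≤ 1) :
    G.wt x + G.wt y + G.wt z + G.wt w ≤
      G.val s + ∑ k ∈ M.coveredSet s \ G.coveredSet τ δ, G.wt k := by
  rw [mem_missed] at hx hy hz hw
  have hTx := G.len_le_T x
  have hTy := G.len_le_T y
  obtain ⟨κ, hκ, hκx⟩ := blocks_of_not_covered hinj hNE hx.2.1 hx.2.2 0 le_rfl (by linarith)
  have hCov : M.coveredSet s = {κ} := Finset.eq_singleton_iff_unique_mem.2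
    ⟨hκ, fun k hk => Finset.card_le_one.1 hC k hk κ hκ⟩
  have hκO : ¬ G.Covered τ δ κ := by
    intro hκO
    obtain ⟨κ', hκ', hκy⟩ := blocks_of_not_covered hinj hNE hy.2.1 hy.2.2
      (G.T - G.len y) (by linarith) (by linarith)
    obtain rfl : κ' = κ := by simpa [hCov] using hκ'
    have hκC : G.Covered s (M.choice s) κ' := by simpa [TieBreak.coveredSet] using hκ
    have := len_add_len_add_len_le hinj hx.1 hy.1 hκO hxy (fun h => hx.2.1 (h ▸ hκC))
      (fun h => hy.2.1 (h ▸ hκC))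
    linarith [lt_add_add_of_meets_of_meets hκx hκy]
  have hA : M.coveredSet s \ G.coveredSet τ δ = M.coveredSet s := by
    simp [hCov, hκO]
  rw [hA, TieBreak.sum_wt_coveredSet]
  -- two jobs that cannot both be made to avoid the other's interval are long; by the packing
  -- of `τ` at most one of the six pairs is like that
  have pair {a b : Fin G.n} (ha : ¬ G.Covered s (M.choice s) a)
      (hb : ¬ G.Covered s (M.choice s) b) (hab : a ≠ b)
      (hlen : ¬ (G.T < 2 * G.len a + G.len b ∧ G.T < 2 * G.len b + G.len a)) :
      G.wt a + G.wt b ≤ G.val s := by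
    rcases not_and_or.1 hlen with h | h
    · exact wt_add_wt_le_val hinj hNE ha hab.symm (not_lt.1 h)
    · linarith [wt_add_wt_le_val hinj hNE hb hab (not_lt.1 h)]
  have hpack := sum_len_le_T hinj (τ := τ) (δ := δ) (S := {x, y, z, w})
    (by simp [Finset.insert_subset_iff, hx.1, hy.1, hz.1, hw.1])
  rw [Finset.sum_insert (by simp [*]), Finset.sum_insert (by simp [*]),
    Finset.sum_pair hzw] at hpack
  have := G.len_nonneg x
  have := G.len_nonneg y
  have := G.len_nonneg z
  have := G.len_nonneg w
  by_cases hxy' : G.T < 2 * G.len x + G.len y ∧ G.T < 2 * G.len y + G.len x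
  · linarith [pair hx.2.1 hz.2.1 hxz (fun h => by linarith [h.1, h.2, hxy'.1, hxy'.2]),
      pair hy.2.1 hw.2.1 hyw (fun h => by linarith [h.1, h.2, hxy'.1, hxy'.2])]
  by_cases hzw' : G.T < 2 * G.len z + G.len w ∧ G.T < 2 * G.len w + G.len z
  · linarith [pair hx.2.1 hz.2.1 hxz (fun h => by linarith [h.1, h.2, hzw'.1, hzw'.2]),
      pair hy.2.1 hw.2.1 hyw (fun h => by linarith [h.1, h.2, hzw'.1, hzw'.2])]
  linarith [pair hx.2.1 hy.2.1 hxy hxy', pair hz.2.1 hw.2.1 hzw hzw']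

lemma sum_wt_missed_le (hinj : Function.Injective G.color) (hn : G.n ≤ 5)
    (hNE : G.IsNE M s) :
    ∑ k ∈ G.missed M s τ δ, G.wt k ≤
      G.val s + ∑ k ∈ M.coveredSet s \ G.coveredSet τ δ, G.wt k := by
  have hA : 0 ≤ ∑ k ∈ M.coveredSet s \ G.coveredSet τ δ, G.wt k :=
    Finset.sum_nonneg fun k _ => G.wt_nonneg k
  have hmem {j : Fin G.n} {S : Finset (Fin G.n)} (hD : G.missed M s τ δ = S) (hj : j ∈ S) :
      j ∈ G.missed M s τ δ := hD ▸ hj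
  have hcard : (M.coveredSet s).card + (G.missed M s τ δ).card ≤ 5 := by
    rw [← Finset.card_union_of_disjoint]
    · exact (Finset.card_le_univ _).trans (by simpa using hn)
    · refine Finset.disjoint_left.2 fun k hk hk' => (mem_missed.1 hk').2.1 ?_
      simpa [TieBreak.coveredSet] using hk
  obtain h | h | h | h | h | h : (G.missed M s τ δ).card = 0 ∨ (G.missed M s τ δ).card = 1 ∨
      (G.missed M s τ δ).card = 2 ∨ (G.missed M s τ δ).card = 3 ∨
      (G.missed M s τ δ).card = 4 ∨ (G.missed M s τ δ).card = 5 := by omega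
  · rw [Finset.card_eq_zero.1 h, Finset.sum_empty]
    linarith [val_nonneg M s]
  · obtain ⟨x, hD⟩ := Finset.card_eq_one.1 h
    rw [hD, Finset.sum_singleton]
    linarith [wt_le_val s x]
  · obtain ⟨x, y, hxy, hD⟩ := Finset.card_eq_two.1 h
    rw [hD, Finset.sum_pair hxy]
    exact wt_add_wt_le_of_mem_missed hinj hNE (hmem hD (by simp)) (hmem hD (by simp)) hxy
  · obtain ⟨x, y, z, hxy, hxz, hyz, hD⟩ := Finset.card_eq_three.1 h
    rw [hD, Finset.sum_insert (by simp [*]), Finset.sum_pair hyz, ← add_assoc]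
    exact sum_wt_three_le hinj hNE (hmem hD (by simp)) (hmem hD (by simp)) (hmem hD (by simp))
      hxy hxz hyz (by omega)
  · obtain ⟨x, y, z, w, hxy, hxz, hxw, hyz, hyw, hzw, hD⟩ := Finset.card_eq_four.1 h
    rw [hD, Finset.sum_insert (by simp [*]), Finset.sum_insert (by simp [*]),
      Finset.sum_pair hzw, ← add_assoc, ← add_assoc]
    exact sum_wt_four_le hinj hNE (hmem hD (by simp)) (hmem hD (by simp)) (hmem hD (by simp))
      (hmem hD (by simp)) hxy hxz hxw hyz hyw hzw (by omega)
  · obtain ⟨x, hx⟩ := Finset.card_pos.1 (by omega : 0 < (G.missed M s τ δ).card)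
    rw [mem_missed] at hx
    obtain ⟨k, hk, -⟩ := blocks_of_not_covered hinj hNE hx.2.1 hx.2.2 0 le_rfl
      (by simpa using G.len_le_T x)
    have : (M.coveredSet s).card = 0 := by omega
    simp_all

lemma profit_le_two_mul_val (hinj : Function.Injective G.color) (hn : G.n ≤ 5)
    (hNE : G.IsNE M s) (τ : G.Profile) (δ : G.Config) : G.profit τ δ ≤ 2 * G.val s := by
  have hmissed : ∑ k ∈ G.coveredSet τ δ \ M.coveredSet s, G.wt k =
      ∑ k ∈ G.missed M s τ δ, G.wt k :=
    (Finset.sum_filter_of_ne fun k _ hk => (G.wt_nonneg k).lt_of_ne' hk).symm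
  have := sum_wt_missed_le (τ := τ) (δ := δ) hinj hn hNE
  rw [profit_eq_sum_coveredSet, ← Finset.sum_inter_add_sum_sdiff _ (M.coveredSet s), hmissed,
    Finset.inter_comm]
  rw [← M.sum_wt_coveredSet s,
    ← Finset.sum_inter_add_sum_sdiff (M.coveredSet s) (G.coveredSet τ δ)] at this ⊢
  linarith

end Comparison

end Game

/-- For games in `G_single` with at most 5 jobs, the price of anarchy is at most 2. -/
theorem single_PoA_le_two (G : Game) (hsingle : G.Single) (hn : G.n ≤ 5)
    (M : G.TieBreak) (s : G.Profile) (hNE : G.IsNE M s) :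
    G.valOPT ≤ 2 * G.val s := by
  refine csSup_le ⟨_, ⟨fun _ => 0, fun _ => le_rfl, fun j => by simpa using G.len_le_T j⟩, rfl⟩ ?_
  rintro _ ⟨τ, rfl⟩
  rw [← M.choice_opt τ]
  exact Game.profit_le_two_mul_val hsingle.injective hn hNE τ _
end

section
/- Let G be a game in G_single ∩ G_prop (one job per color and w_j = p_j for every job j). For every tie-breaking rule M and every Nash equilibrium σ with respect to M, val(OPT) ≤ 3·val(σ); that is, the price of anarchy of G is at most 3. -/
open Classical

-- ==================== auxiliary lemmas ====================

namespace PoAAux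

lemma profit_eq (G : Game) (s : G.Profile) (γ : G.Config) :
    G.profit s γ = ∑ j ∈ Finset.univ.filter (fun j => G.Covered s γ j), G.wt j := by
  rw [Finset.sum_filter]; rfl

lemma profit_nonneg (G : Game) (s : G.Profile) (γ : G.Config) : 0 ≤ G.profit s γ :=
  Finset.sum_nonneg fun j _ => by split <;> simp [G.wt_nonneg j]

lemma profit_le_total (G : Game) (s : G.Profile) (γ : G.Config) :
    G.profit s γ ≤ ∑ j, G.wt j :=
  Finset.sum_le_sum fun j _ => by split <;> simp [G.wt_nonneg j]

lemma profit_le_val (G : Game) (s : G.Profile) (γ : G.Config) :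
    G.profit s γ ≤ G.val s :=
  le_csSup ⟨∑ j, G.wt j, by rintro x ⟨γ', rfl⟩; exact profit_le_total G s γ'⟩ ⟨γ, rfl⟩


lemma window (G : Game) (hsingle : G.Single) (hprop : ∀ j, G.wt j = G.len j)
    (M : G.TieBreak) (s : G.Profile) (hNE : G.IsNE M s)
    (j : Fin G.n) (hj : ¬ G.Covered s (M.choice s) j)
    (a : ℝ) (ha : 0 ≤ a) (haT : a + G.len j ≤ G.T) :
    G.len j ≤ ∑ k ∈ (Finset.univ.filter fun k => G.Covered s (M.choice s) k ∧
        s.start k < a + G.len j ∧ a < s.start k + G.len k), G.len k := by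
  classical
  by_contra hcon
  push_neg at hcon
  have hp0 : 0 < G.len j :=
    lt_of_le_of_lt (Finset.sum_nonneg fun k _ => G.len_nonneg k) hcon
  set p := G.len j with hpdef
  set γ := M.choice s with hγ
  set Hit := (Finset.univ.filter fun k => G.Covered s γ k ∧
      s.start k < a + p ∧ a < s.start k + G.len k) with hHit
  set Cov := (Finset.univ.filter fun k => G.Covered s γ k) with hCov
  have hs'nn : ∀ k, 0 ≤ Function.update s.start j a k := by
    intro k; rcases eq_or_ne k j with rfl | h
    · simpa using ha
    · simpa [Function.update_of_ne h] using s.start_nonneg k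
  have hs'le : ∀ k, Function.update s.start j a k + G.len k ≤ G.T := by
    intro k; rcases eq_or_ne k j with rfl | h
    · simpa using haT
    · simpa [Function.update_of_ne h] using s.start_le k
  set s' : G.Profile := ⟨Function.update s.start j a, hs'nn, hs'le⟩ with hs'
  set γ' : G.Config := fun t => if a ≤ t ∧ t < a + p then G.color j else γ t with hγ'
  have hjcov' : G.Covered s' γ' j := by
    intro t h1 h2
    have h1' : a ≤ t := by simpa [hs', Function.update_self] using h1
    have h2' : t < a + p := by simpa [hs', Function.update_self] using h2
    simp [hγ', h1', h2']
  have hkeep : ∀ k, G.Covered s γ k → k ∉ Hit → G.Covered s' γ' k := by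
    intro k hk hnot t h1 h2
    have hkj : k ≠ j := by rintro rfl; exact hj hk
    have h1' : s.start k ≤ t := by simpa [hs', Function.update_of_ne hkj] using h1
    have h2' : t < s.start k + G.len k := by simpa [hs', Function.update_of_ne hkj] using h2
    have hno : ¬(a ≤ t ∧ t < a + p) := by
      rintro ⟨u1, u2⟩
      apply hnot
      simp only [hHit, Finset.mem_filter, Finset.mem_univ, true_and]
      exact ⟨hk, lt_of_le_of_lt h1' u2, lt_of_le_of_lt u1 h2'⟩
    show γ' t = G.color k
    have hne : γ' t = γ t := if_neg hno
    rw [hne]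
    exact hk t h1' h2'
  have hsub : Hit ⊆ Cov := by
    intro k hk
    simp only [hHit, Finset.mem_filter, Finset.mem_univ, true_and] at hk
    simp only [hCov, Finset.mem_filter, Finset.mem_univ, true_and]
    exact hk.1
  have hjnot : j ∉ Cov \ Hit := by
    simp only [Finset.mem_sdiff, hCov, Finset.mem_filter, Finset.mem_univ, true_and]
    rintro ⟨h, -⟩; exact hj h
  have h1 : ∑ k ∈ insert j (Cov \ Hit), G.wt k ≤ G.profit s' γ' := by
    rw [profit_eq]
    apply Finset.sum_le_sum_of_subset_of_nonneg
    · intro k hk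
      simp only [Finset.mem_insert, Finset.mem_sdiff] at hk
      simp only [Finset.mem_filter, Finset.mem_univ, true_and]
      rcases hk with rfl | ⟨hk1, hk2⟩
      · exact hjcov'
      · apply hkeep k _ hk2
        simpa only [hCov, Finset.mem_filter, Finset.mem_univ, true_and] using hk1
    · intro k _ _; exact G.wt_nonneg k
  rw [Finset.sum_insert hjnot, Finset.sum_sdiff_eq_sub hsub] at h1
  have hwtlen : ∑ k ∈ Hit, G.wt k = ∑ k ∈ Hit, G.len k :=
    Finset.sum_congr rfl fun k _ => hprop k
  have hWeq : G.profit s γ = G.val s := M.choice_opt s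
  have hCovsum : G.profit s γ = ∑ k ∈ Cov, G.wt k := profit_eq G s γ
  have hval' : G.val s < G.val s' := by
    have h2 : G.profit s' γ' ≤ G.val s' := profit_le_val G s' γ'
    have h3 : G.wt j = p := hprop j
    nlinarith [h1, hcon, hwtlen, hWeq, hCovsum, h2, h3]
  set δ := M.choice s' with hδ
  have hδj : G.Covered s' δ j := by
    by_contra hnc
    have h4 : G.profit s' δ ≤ G.profit s δ := by
      rw [profit_eq, profit_eq]
      apply Finset.sum_le_sum_of_subset_of_nonneg
      · intro k hk
        simp only [Finset.mem_filter, Finset.mem_univ, true_and] at hk ⊢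
        have hkj : k ≠ j := by rintro rfl; exact hnc hk
        intro t ht1 ht2
        exact hk t (by simpa [hs', Function.update_of_ne hkj] using ht1)
          (by simpa [hs', Function.update_of_ne hkj] using ht2)
      · intro k _ _; exact G.wt_nonneg k
    have h5 : G.profit s δ ≤ G.val s := profit_le_val G s δ
    have h6 : G.profit s' δ = G.val s' := M.choice_opt s'
    linarith
  set i := G.color j with hi
  have hu' : G.wt j ≤ G.utility M i s' := by
    unfold Game.utility
    have hterm : (if G.color j = i ∧ G.Covered s' (M.choice s') j then G.wt j else 0)
        ≤ ∑ k : Fin G.n, if G.color k = i ∧ G.Covered s' (M.choice s') k then G.wt k else 0 :=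
      Finset.single_le_sum
        (f := fun k => if G.color k = i ∧ G.Covered s' (M.choice s') k then G.wt k else 0)
        (fun k _ => by
          show (0:ℝ) ≤ if G.color k = i ∧ G.Covered s' (M.choice s') k then G.wt k else 0
          split
          · exact G.wt_nonneg k
          · exact le_refl 0) (Finset.mem_univ j)
    rwa [if_pos ⟨hi.symm, by rw [← hδ]; exact hδj⟩] at hterm
  have hu : G.utility M i s = 0 := by
    apply Finset.sum_eq_zero
    intro k _
    rcases eq_or_ne k j with rfl | hkj
    · rw [if_neg]; rintro ⟨-, h⟩; exact hj (by rw [hγ]; exact h)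
    · rw [if_neg]; rintro ⟨h, -⟩; exact hkj (hsingle.injective (hi ▸ h))
  have hle := hNE i s' (by
    intro k hk
    have hkj : k ≠ j := by rintro rfl; exact hk rfl
    simp [hs', Function.update_of_ne hkj])
  rw [hu] at hle
  have hwj : 0 < G.wt j := by rw [hprop]; exact hp0
  linarith


lemma sum_len_le {ι : Type*} (F : Finset ι) (st ln : ι → ℝ) (T : ℝ) (hT : 0 ≤ T)
    (hln : ∀ i, 0 ≤ ln i) (h0 : ∀ i, 0 ≤ st i) (h1 : ∀ i, st i + ln i ≤ T)
    (hd : ∀ i ∈ F, ∀ j ∈ F, i ≠ j →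
      Disjoint (Set.Ico (st i) (st i + ln i)) (Set.Ico (st j) (st j + ln j))) :
    ∑ i ∈ F, ln i ≤ T := by
  classical
  have hpd : (F : Set ι).PairwiseDisjoint (fun i => Set.Ico (st i) (st i + ln i)) := by
    intro i hi j hj hij
    exact hd i hi j hj hij
  have key : ∑ i ∈ F, MeasureTheory.volume (Set.Ico (st i) (st i + ln i))
      = MeasureTheory.volume (⋃ i ∈ F, Set.Ico (st i) (st i + ln i)) :=
    (MeasureTheory.measure_biUnion_finset hpd (fun i _ => measurableSet_Ico)).symm
  have hsubset : (⋃ i ∈ F, Set.Ico (st i) (st i + ln i)) ⊆ Set.Ico 0 T := by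
    intro t ht
    simp only [Set.mem_iUnion] at ht
    obtain ⟨i, _, h⟩ := ht
    exact ⟨le_trans (h0 i) h.1, lt_of_lt_of_le h.2 (h1 i)⟩
  have hle : ∑ i ∈ F, MeasureTheory.volume (Set.Ico (st i) (st i + ln i))
      ≤ ENNReal.ofReal T := by
    rw [key]
    calc MeasureTheory.volume (⋃ i ∈ F, Set.Ico (st i) (st i + ln i))
        ≤ MeasureTheory.volume (Set.Ico (0:ℝ) T) := MeasureTheory.measure_mono hsubset
      _ = ENNReal.ofReal (T - 0) := Real.volume_Ico
      _ = ENNReal.ofReal T := by rw [sub_zero]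
  have heq : ∑ i ∈ F, MeasureTheory.volume (Set.Ico (st i) (st i + ln i))
      = ENNReal.ofReal (∑ i ∈ F, ln i) := by
    rw [ENNReal.ofReal_sum_of_nonneg (fun i _ => hln i)]
    exact Finset.sum_congr rfl fun i _ => by rw [Real.volume_Ico, add_sub_cancel_left]
  rw [heq] at hle
  exact (ENNReal.ofReal_le_ofReal_iff hT).mp hle

lemma profit_le_T (G : Game) (hsingle : G.Single) (hprop : ∀ j, G.wt j = G.len j)
    (s : G.Profile) (γ : G.Config) : G.profit s γ ≤ G.T := by
  classical
  rw [profit_eq]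
  have hswap : ∑ k ∈ Finset.univ.filter (fun k => G.Covered s γ k), G.wt k
      = ∑ k ∈ Finset.univ.filter (fun k => G.Covered s γ k), G.len k :=
    Finset.sum_congr rfl fun k _ => hprop k
  rw [hswap]
  apply sum_len_le _ s.start G.len G.T G.T_pos.le G.len_nonneg s.start_nonneg s.start_le
  intro i hi k hk hik
  rw [Set.disjoint_left]
  intro t hti htk
  simp only [Finset.mem_filter, Finset.mem_univ, true_and] at hi hk
  exact hik (hsingle.injective ((hi t hti.1 hti.2).symm.trans (hk t htk.1 htk.2)))

lemma sweep (G : Game) (s : G.Profile) (C : Finset (Fin G.n)) (p : ℝ) (hp0 : 0 < p)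
    (win : ∀ a : ℝ, 0 ≤ a → a + p ≤ G.T →
      p ≤ ∑ k ∈ C.filter (fun k => s.start k < a + p ∧ a < s.start k + G.len k), G.len k) :
    ∀ m : ℕ, ∀ F : Finset (Fin G.n), F.card ≤ m → F ⊆ C → ∀ x : ℝ, 0 ≤ x →
      (∀ k ∈ C, x < s.start k + G.len k → k ∈ F) →
      G.T ≤ x + 2 * ∑ k ∈ F, G.len k + p := by
  classical
  intro m
  induction m with
  | zero =>
    intro F hF hFC x hx hfr
    have hF0 : F = ∅ := Finset.card_eq_zero.mp (Nat.le_zero.mp hF)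
    subst hF0
    by_cases hxT : x + p ≤ G.T
    · exfalso
      have hwin := win x hx hxT
      have hemp : C.filter (fun k => s.start k < x + p ∧ x < s.start k + G.len k) = ∅ := by
        apply Finset.eq_empty_of_forall_notMem
        intro k hk
        simp only [Finset.mem_filter] at hk
        exact absurd (hfr k hk.1 hk.2.2) (Finset.notMem_empty k)
      rw [hemp] at hwin
      simp only [Finset.sum_empty] at hwin
      linarith
    · push_neg at hxT
      simp only [Finset.sum_empty]
      linarith
  | succ m ih =>
    intro F hF hFC x hx hfr
    by_cases hxT : x + p ≤ G.T
    · have hwin := win x hx hxT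
      set Hit := C.filter (fun k => s.start k < x + p ∧ x < s.start k + G.len k) with hHit
      have hHitF : Hit ⊆ F := by
        intro k hk
        simp only [hHit, Finset.mem_filter] at hk
        exact hfr k hk.1 hk.2.2
      have hne : Hit.Nonempty := by
        rcases Finset.eq_empty_or_nonempty Hit with h | h
        · rw [h] at hwin; simp only [Finset.sum_empty] at hwin; linarith
        · exact h
      obtain ⟨k0, hk0, hk0e⟩ := Finset.exists_mem_eq_sup' hne (fun k => s.start k + G.len k)
      set B := Hit.sup' hne (fun k => s.start k + G.len k) with hB
      set x' := max (x + p) B with hx'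
      have hSig : p ≤ ∑ k ∈ Hit, G.len k := hwin
      have hlenk0 : G.len k0 ≤ ∑ k ∈ Hit, G.len k :=
        Finset.single_le_sum (fun k _ => G.len_nonneg k) hk0
      have hk0s : s.start k0 < x + p := by
        have := Finset.mem_filter.mp hk0
        exact this.2.1
      have hadv : x' ≤ x + 2 * ∑ k ∈ Hit, G.len k := by
        rw [hx']
        apply max_le
        · linarith
        · rw [hk0e]; linarith
      have hcard : (F \ Hit).card ≤ m := by
        have hlt : (F \ Hit).card < F.card :=
          Finset.card_lt_card (Finset.sdiff_ssubset hHitF hne)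
        omega
      have hsubC : F \ Hit ⊆ C := fun k hk => hFC (Finset.mem_sdiff.mp hk).1
      have hx'0 : 0 ≤ x' := le_trans (by linarith) (le_max_left (x + p) B)
      have hfr' : ∀ k ∈ C, x' < s.start k + G.len k → k ∈ F \ Hit := by
        intro k hkC hke
        rw [Finset.mem_sdiff]
        refine ⟨hfr k hkC ?_, ?_⟩
        · have : x < x' := lt_of_lt_of_le (by linarith) (le_max_left (x + p) B)
          linarith
        · intro hk
          have h1 : s.start k + G.len k ≤ B := Finset.le_sup' (fun k => s.start k + G.len k) hk
          have h2 : B ≤ x' := le_max_right _ _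
          linarith
      have hIH := ih (F \ Hit) hcard hsubC x' hx'0 hfr'
      have hsum : ∑ k ∈ F, G.len k = ∑ k ∈ F \ Hit, G.len k + ∑ k ∈ Hit, G.len k :=
        (Finset.sum_sdiff hHitF).symm
      linarith
    · push_neg at hxT
      have h0 : 0 ≤ ∑ k ∈ F, G.len k := Finset.sum_nonneg fun k _ => G.len_nonneg k
      linarith


end PoAAux


open PoAAux in
/-- For games in `G_single ∩ G_prop` (one job per color, weight equal to length),
the price of anarchy is at most 3. -/
theorem single_prop_PoA_le_three (G : Game) (hsingle : G.Single)
    (hprop : ∀ j, G.wt j = G.len j)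
    (M : G.TieBreak) (s : G.Profile) (hNE : G.IsNE M s) :
    G.valOPT ≤ 3 * G.val s := by
  classical
  have hWeq : G.profit s (M.choice s) = G.val s := M.choice_opt s
  have hW0 : 0 ≤ G.val s := hWeq ▸ profit_nonneg G s (M.choice s)
  have key : ∀ (s' : G.Profile) (γ' : G.Config), G.profit s' γ' ≤ 3 * G.val s := by
    intro s' γ'
    by_cases hall : ∀ j, G.Covered s (M.choice s) j
    · have h1 : G.profit s' γ' ≤ ∑ j, G.wt j := profit_le_total G s' γ'
      have h2 : (∑ j, G.wt j) = G.profit s (M.choice s) :=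
        (Finset.sum_congr rfl fun j _ => by rw [if_pos (hall j)]).symm
      linarith
    · push_neg at hall
      obtain ⟨j, hj⟩ := hall
      have hp0 : 0 < G.len j := by
        rcases lt_or_eq_of_le (G.len_nonneg j) with h | h
        · exact h
        · exfalso
          apply hj
          intro t h1 h2
          rw [← h] at h2
          linarith
      set C := Finset.univ.filter (fun k => G.Covered s (M.choice s) k) with hC
      have hwin' : ∀ a : ℝ, 0 ≤ a → a + G.len j ≤ G.T →
          G.len j ≤ ∑ k ∈ C.filter
            (fun k => s.start k < a + G.len j ∧ a < s.start k + G.len k), G.len k := by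
        intro a ha haT
        rw [hC, Finset.filter_filter]
        exact window G hsingle hprop M s hNE j hj a ha haT
      have hWC : ∑ k ∈ C, G.len k = G.val s := by
        rw [← hWeq, profit_eq]
        exact Finset.sum_congr rfl fun k _ => (hprop k).symm
      have hpW : G.len j ≤ G.val s := by
        have h1 := hwin' 0 le_rfl (by simpa using G.len_le_T j)
        have h2 : ∑ k ∈ C.filter
            (fun k => s.start k < 0 + G.len j ∧ 0 < s.start k + G.len k), G.len k
            ≤ ∑ k ∈ C, G.len k :=
          Finset.sum_le_sum_of_subset_of_nonneg (Finset.filter_subset _ _)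
            (fun k _ _ => G.len_nonneg k)
        linarith [hWC]
      have hT3 : G.T ≤ 3 * G.val s := by
        have hs := sweep G s C (G.len j) hp0 hwin' C.card C le_rfl Finset.Subset.rfl 0 le_rfl
          (fun k hk _ => hk)
        rw [hWC] at hs
        linarith
      have h4 : G.profit s' γ' ≤ G.T := profit_le_T G hsingle hprop s' γ'
      linarith
  apply Real.sSup_le
  · rintro x ⟨s', rfl⟩
    exact Real.sSup_le (by rintro x ⟨γ', rfl⟩; exact key s' γ') (by linarith)
  · linarith
end

section
/- Let 0 < ε < 1/4 and consider the interval scheduling game with T = 3 and c = 2 in which S_1 consists of two jobs with lengths 3 and 1 and weights 3 and 1 respectively, and S_2 consists of four jobs, each with length 1 − ε and weight 1 − ε (so the game is in G_prop). For every tie-breaking rule M, no strategy profile of this game is a Nash equilibrium with respect to M. -/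
open Classical
set_option maxHeartbeats 1000000

/-- The 2-color game in `G_prop` with `T = 3`, where player 1 has jobs of
length/weight `3` and `1`, and player 2 has four jobs of length/weight `1 - ε`
(for `0 < ε < 1/4`), has no Nash equilibrium for any tie-breaking rule. -/
theorem prop_game_no_NE (ε : ℝ) (hε1 : 0 < ε) (hε2 : ε < 1 / 4)
    (G : Game) (hn : G.n = 6) (hc : G.c = 2) (hT : G.T = 3)
    (hcol : ∀ j : Fin G.n, (G.color j : ℕ) = if (j : ℕ) < 2 then 0 else 1)
    (hlen : ∀ j : Fin G.n, G.len j =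
      if (j : ℕ) = 0 then 3 else if (j : ℕ) = 1 then 1 else 1 - ε)
    (hwt : ∀ j : Fin G.n, G.wt j =
      if (j : ℕ) = 0 then 3 else if (j : ℕ) = 1 then 1 else 1 - ε) :
    ∀ (M : G.TieBreak) (s : G.Profile), ¬ G.IsNE M s := by
  have hε3 : ε < 1 := by linarith
  obtain ⟨n, c, T, T_pos, color, len, wt, len_nonneg, len_le_T, wt_nonneg⟩ := G
  have hn' : n = 6 := hn
  have hc' : c = 2 := hc
  have hT' : T = 3 := hT
  subst hn'; subst hc'; subst hT'
  have hcol' : ∀ j : Fin 6, ((color j : Fin 2) : ℕ) = if (j : ℕ) < 2 then 0 else 1 := hcol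
  have hlen' : ∀ j : Fin 6, len j = if (j : ℕ) = 0 then 3 else if (j : ℕ) = 1 then 1 else 1 - ε := hlen
  have hwt' : ∀ j : Fin 6, wt j = if (j : ℕ) = 0 then 3 else if (j : ℕ) = 1 then 1 else 1 - ε := hwt
  intro M s hNE
  -- lengths
  have l0 : (⟨6, 2, 3, T_pos, color, len, wt, len_nonneg, len_le_T, wt_nonneg⟩ : Game).len (0 : Fin 6) = 3 := by
    show len 0 = 3
    rw [hlen' 0, if_pos (by decide : ((0 : Fin 6) : ℕ) = 0)]
  have l1 : (⟨6, 2, 3, T_pos, color, len, wt, len_nonneg, len_le_T, wt_nonneg⟩ : Game).len (1 : Fin 6) = 1 := by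
    show len 1 = 1
    rw [hlen' 1, if_neg (by decide : ¬ ((1 : Fin 6) : ℕ) = 0),
      if_pos (by decide : ((1 : Fin 6) : ℕ) = 1)]
  have l2 : (⟨6, 2, 3, T_pos, color, len, wt, len_nonneg, len_le_T, wt_nonneg⟩ : Game).len (2 : Fin 6) = 1 - ε := by
    show len 2 = 1 - ε
    rw [hlen' 2, if_neg (by decide : ¬ ((2 : Fin 6) : ℕ) = 0),
      if_neg (by decide : ¬ ((2 : Fin 6) : ℕ) = 1)]
  have l3 : (⟨6, 2, 3, T_pos, color, len, wt, len_nonneg, len_le_T, wt_nonneg⟩ : Game).len (3 : Fin 6) = 1 - ε := by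
    show len 3 = 1 - ε
    rw [hlen' 3, if_neg (by decide : ¬ ((3 : Fin 6) : ℕ) = 0),
      if_neg (by decide : ¬ ((3 : Fin 6) : ℕ) = 1)]
  have l4 : (⟨6, 2, 3, T_pos, color, len, wt, len_nonneg, len_le_T, wt_nonneg⟩ : Game).len (4 : Fin 6) = 1 - ε := by
    show len 4 = 1 - ε
    rw [hlen' 4, if_neg (by decide : ¬ ((4 : Fin 6) : ℕ) = 0),
      if_neg (by decide : ¬ ((4 : Fin 6) : ℕ) = 1)]
  have l5 : (⟨6, 2, 3, T_pos, color, len, wt, len_nonneg, len_le_T, wt_nonneg⟩ : Game).len (5 : Fin 6) = 1 - ε := by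
    show len 5 = 1 - ε
    rw [hlen' 5, if_neg (by decide : ¬ ((5 : Fin 6) : ℕ) = 0),
      if_neg (by decide : ¬ ((5 : Fin 6) : ℕ) = 1)]
  -- weights
  have w0 : (⟨6, 2, 3, T_pos, color, len, wt, len_nonneg, len_le_T, wt_nonneg⟩ : Game).wt (0 : Fin 6) = 3 := by
    show wt 0 = 3
    rw [hwt' 0, if_pos (by decide : ((0 : Fin 6) : ℕ) = 0)]
  have w1 : (⟨6, 2, 3, T_pos, color, len, wt, len_nonneg, len_le_T, wt_nonneg⟩ : Game).wt (1 : Fin 6) = 1 := by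
    show wt 1 = 1
    rw [hwt' 1, if_neg (by decide : ¬ ((1 : Fin 6) : ℕ) = 0),
      if_pos (by decide : ((1 : Fin 6) : ℕ) = 1)]
  have w2 : (⟨6, 2, 3, T_pos, color, len, wt, len_nonneg, len_le_T, wt_nonneg⟩ : Game).wt (2 : Fin 6) = 1 - ε := by
    show wt 2 = 1 - ε
    rw [hwt' 2, if_neg (by decide : ¬ ((2 : Fin 6) : ℕ) = 0),
      if_neg (by decide : ¬ ((2 : Fin 6) : ℕ) = 1)]
  have w3 : (⟨6, 2, 3, T_pos, color, len, wt, len_nonneg, len_le_T, wt_nonneg⟩ : Game).wt (3 : Fin 6) = 1 - ε := by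
    show wt 3 = 1 - ε
    rw [hwt' 3, if_neg (by decide : ¬ ((3 : Fin 6) : ℕ) = 0),
      if_neg (by decide : ¬ ((3 : Fin 6) : ℕ) = 1)]
  have w4 : (⟨6, 2, 3, T_pos, color, len, wt, len_nonneg, len_le_T, wt_nonneg⟩ : Game).wt (4 : Fin 6) = 1 - ε := by
    show wt 4 = 1 - ε
    rw [hwt' 4, if_neg (by decide : ¬ ((4 : Fin 6) : ℕ) = 0),
      if_neg (by decide : ¬ ((4 : Fin 6) : ℕ) = 1)]
  have w5 : (⟨6, 2, 3, T_pos, color, len, wt, len_nonneg, len_le_T, wt_nonneg⟩ : Game).wt (5 : Fin 6) = 1 - ε := by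
    show wt 5 = 1 - ε
    rw [hwt' 5, if_neg (by decide : ¬ ((5 : Fin 6) : ℕ) = 0),
      if_neg (by decide : ¬ ((5 : Fin 6) : ℕ) = 1)]
  -- colors
  have c1 : (⟨6, 2, 3, T_pos, color, len, wt, len_nonneg, len_le_T, wt_nonneg⟩ : Game).color (1 : Fin 6) = (⟨6, 2, 3, T_pos, color, len, wt, len_nonneg, len_le_T, wt_nonneg⟩ : Game).color (0 : Fin 6) := by
    apply Fin.ext
    show ((color 1 : Fin 2) : ℕ) = ((color 0 : Fin 2) : ℕ)
    rw [hcol' 0, hcol' 1]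
    decide
  have colj2 : ∀ j : Fin 6, 2 ≤ (j : ℕ) → (⟨6, 2, 3, T_pos, color, len, wt, len_nonneg, len_le_T, wt_nonneg⟩ : Game).color j = (⟨6, 2, 3, T_pos, color, len, wt, len_nonneg, len_le_T, wt_nonneg⟩ : Game).color (2 : Fin 6) := by
    intro j hj
    apply Fin.ext
    show ((color j : Fin 2) : ℕ) = ((color 2 : Fin 2) : ℕ)
    rw [hcol' j, hcol' 2, if_neg (show ¬ (j : ℕ) < 2 by omega)]
    decide
  have cne : (⟨6, 2, 3, T_pos, color, len, wt, len_nonneg, len_le_T, wt_nonneg⟩ : Game).color (0 : Fin 6) ≠ (⟨6, 2, 3, T_pos, color, len, wt, len_nonneg, len_le_T, wt_nonneg⟩ : Game).color (2 : Fin 6) := by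
    intro h
    have h2 := congrArg (fun x : Fin 2 => (x : ℕ)) h
    simp only at h2
    rw [hcol' 0, hcol' 2] at h2
    exact absurd h2 (by decide)
  have hTm : (⟨6, 2, 3, T_pos, color, len, wt, len_nonneg, len_le_T, wt_nonneg⟩ : Game).T = 3 := rfl
  -- start of job 0 is 0
  have start0 : ∀ p : (⟨6, 2, 3, T_pos, color, len, wt, len_nonneg, len_le_T, wt_nonneg⟩ : Game).Profile, p.start (0 : Fin 6) = 0 := by
    intro p
    have h1 := p.start_le (0 : Fin 6)
    rw [l0, hTm] at h1
    have h2 := p.start_nonneg (0 : Fin 6)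
    linarith
  -- if job 0 is covered, the machine is color 0 on [0,3)
  have cov0_all : ∀ (p : (⟨6, 2, 3, T_pos, color, len, wt, len_nonneg, len_le_T, wt_nonneg⟩ : Game).Profile) (γ : (⟨6, 2, 3, T_pos, color, len, wt, len_nonneg, len_le_T, wt_nonneg⟩ : Game).Config), (⟨6, 2, 3, T_pos, color, len, wt, len_nonneg, len_le_T, wt_nonneg⟩ : Game).Covered p γ (0 : Fin 6) →
      ∀ t : ℝ, 0 ≤ t → t < 3 → γ t = (⟨6, 2, 3, T_pos, color, len, wt, len_nonneg, len_le_T, wt_nonneg⟩ : Game).color (0 : Fin 6) := by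
    intro p γ h t ht0 ht3
    exact h t (by rw [start0 p]; exact ht0) (by rw [start0 p, l0]; linarith)
  have cov0_1 : ∀ (p : (⟨6, 2, 3, T_pos, color, len, wt, len_nonneg, len_le_T, wt_nonneg⟩ : Game).Profile) (γ : (⟨6, 2, 3, T_pos, color, len, wt, len_nonneg, len_le_T, wt_nonneg⟩ : Game).Config), (⟨6, 2, 3, T_pos, color, len, wt, len_nonneg, len_le_T, wt_nonneg⟩ : Game).Covered p γ (0 : Fin 6) →
      (⟨6, 2, 3, T_pos, color, len, wt, len_nonneg, len_le_T, wt_nonneg⟩ : Game).Covered p γ (1 : Fin 6) := by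
    intro p γ h t h1 h2
    rw [l1] at h2
    have hle := p.start_le (1 : Fin 6)
    rw [l1, hTm] at hle
    have heq := cov0_all p γ h t (le_trans (p.start_nonneg (1 : Fin 6)) h1) (by linarith)
    rw [heq, c1]
  have cov0_not : ∀ (p : (⟨6, 2, 3, T_pos, color, len, wt, len_nonneg, len_le_T, wt_nonneg⟩ : Game).Profile) (γ : (⟨6, 2, 3, T_pos, color, len, wt, len_nonneg, len_le_T, wt_nonneg⟩ : Game).Config) (j : Fin 6), (⟨6, 2, 3, T_pos, color, len, wt, len_nonneg, len_le_T, wt_nonneg⟩ : Game).len j = 1 - ε →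
      (⟨6, 2, 3, T_pos, color, len, wt, len_nonneg, len_le_T, wt_nonneg⟩ : Game).color j = (⟨6, 2, 3, T_pos, color, len, wt, len_nonneg, len_le_T, wt_nonneg⟩ : Game).color (2 : Fin 6) → (⟨6, 2, 3, T_pos, color, len, wt, len_nonneg, len_le_T, wt_nonneg⟩ : Game).Covered p γ (0 : Fin 6) → ¬ (⟨6, 2, 3, T_pos, color, len, wt, len_nonneg, len_le_T, wt_nonneg⟩ : Game).Covered p γ j := by
    intro p γ j hl hcj h0 hj
    have hle := p.start_le j
    rw [hl, hTm] at hle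
    have h1 := hj (p.start j) le_rfl (by rw [hl]; linarith)
    have h2 := cov0_all p γ h0 (p.start j) (p.start_nonneg j) (by linarith)
    rw [h1, hcj] at h2
    exact cne h2.symm
  -- profit expansion
  have profit_eq : ∀ (p : (⟨6, 2, 3, T_pos, color, len, wt, len_nonneg, len_le_T, wt_nonneg⟩ : Game).Profile) (γ : (⟨6, 2, 3, T_pos, color, len, wt, len_nonneg, len_le_T, wt_nonneg⟩ : Game).Config), (⟨6, 2, 3, T_pos, color, len, wt, len_nonneg, len_le_T, wt_nonneg⟩ : Game).profit p γ =
      (if (⟨6, 2, 3, T_pos, color, len, wt, len_nonneg, len_le_T, wt_nonneg⟩ : Game).Covered p γ (0 : Fin 6) then (3:ℝ) else 0) +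
      (if (⟨6, 2, 3, T_pos, color, len, wt, len_nonneg, len_le_T, wt_nonneg⟩ : Game).Covered p γ (1 : Fin 6) then (1:ℝ) else 0) +
      (if (⟨6, 2, 3, T_pos, color, len, wt, len_nonneg, len_le_T, wt_nonneg⟩ : Game).Covered p γ (2 : Fin 6) then 1 - ε else 0) +
      (if (⟨6, 2, 3, T_pos, color, len, wt, len_nonneg, len_le_T, wt_nonneg⟩ : Game).Covered p γ (3 : Fin 6) then 1 - ε else 0) +
      (if (⟨6, 2, 3, T_pos, color, len, wt, len_nonneg, len_le_T, wt_nonneg⟩ : Game).Covered p γ (4 : Fin 6) then 1 - ε else 0) +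
      (if (⟨6, 2, 3, T_pos, color, len, wt, len_nonneg, len_le_T, wt_nonneg⟩ : Game).Covered p γ (5 : Fin 6) then 1 - ε else 0) := by
    intro p γ
    show (∑ j : Fin 6, if (⟨6, 2, 3, T_pos, color, len, wt, len_nonneg, len_le_T, wt_nonneg⟩ : Game).Covered p γ j then (⟨6, 2, 3, T_pos, color, len, wt, len_nonneg, len_le_T, wt_nonneg⟩ : Game).wt j else 0) = _
    rw [Fin.sum_univ_six, w0, w1, w2, w3, w4, w5]
  have utility_eq : ∀ (i : Fin 2) (p : (⟨6, 2, 3, T_pos, color, len, wt, len_nonneg, len_le_T, wt_nonneg⟩ : Game).Profile), (⟨6, 2, 3, T_pos, color, len, wt, len_nonneg, len_le_T, wt_nonneg⟩ : Game).utility M i p =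
      (if (⟨6, 2, 3, T_pos, color, len, wt, len_nonneg, len_le_T, wt_nonneg⟩ : Game).color (0 : Fin 6) = i ∧ (⟨6, 2, 3, T_pos, color, len, wt, len_nonneg, len_le_T, wt_nonneg⟩ : Game).Covered p (M.choice p) (0 : Fin 6) then (3:ℝ) else 0) +
      (if (⟨6, 2, 3, T_pos, color, len, wt, len_nonneg, len_le_T, wt_nonneg⟩ : Game).color (1 : Fin 6) = i ∧ (⟨6, 2, 3, T_pos, color, len, wt, len_nonneg, len_le_T, wt_nonneg⟩ : Game).Covered p (M.choice p) (1 : Fin 6) then (1:ℝ) else 0) +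
      (if (⟨6, 2, 3, T_pos, color, len, wt, len_nonneg, len_le_T, wt_nonneg⟩ : Game).color (2 : Fin 6) = i ∧ (⟨6, 2, 3, T_pos, color, len, wt, len_nonneg, len_le_T, wt_nonneg⟩ : Game).Covered p (M.choice p) (2 : Fin 6) then 1 - ε else 0) +
      (if (⟨6, 2, 3, T_pos, color, len, wt, len_nonneg, len_le_T, wt_nonneg⟩ : Game).color (3 : Fin 6) = i ∧ (⟨6, 2, 3, T_pos, color, len, wt, len_nonneg, len_le_T, wt_nonneg⟩ : Game).Covered p (M.choice p) (3 : Fin 6) then 1 - ε else 0) +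
      (if (⟨6, 2, 3, T_pos, color, len, wt, len_nonneg, len_le_T, wt_nonneg⟩ : Game).color (4 : Fin 6) = i ∧ (⟨6, 2, 3, T_pos, color, len, wt, len_nonneg, len_le_T, wt_nonneg⟩ : Game).Covered p (M.choice p) (4 : Fin 6) then 1 - ε else 0) +
      (if (⟨6, 2, 3, T_pos, color, len, wt, len_nonneg, len_le_T, wt_nonneg⟩ : Game).color (5 : Fin 6) = i ∧ (⟨6, 2, 3, T_pos, color, len, wt, len_nonneg, len_le_T, wt_nonneg⟩ : Game).Covered p (M.choice p) (5 : Fin 6) then 1 - ε else 0) := by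
    intro i p
    show (∑ j : Fin 6, if (⟨6, 2, 3, T_pos, color, len, wt, len_nonneg, len_le_T, wt_nonneg⟩ : Game).color j = i ∧ (⟨6, 2, 3, T_pos, color, len, wt, len_nonneg, len_le_T, wt_nonneg⟩ : Game).Covered p (M.choice p) j then (⟨6, 2, 3, T_pos, color, len, wt, len_nonneg, len_le_T, wt_nonneg⟩ : Game).wt j else 0) = _
    rw [Fin.sum_univ_six, w0, w1, w2, w3, w4, w5]
  -- profit is at most the value
  have le_val : ∀ (p : (⟨6, 2, 3, T_pos, color, len, wt, len_nonneg, len_le_T, wt_nonneg⟩ : Game).Profile) (γ : (⟨6, 2, 3, T_pos, color, len, wt, len_nonneg, len_le_T, wt_nonneg⟩ : Game).Config), (⟨6, 2, 3, T_pos, color, len, wt, len_nonneg, len_le_T, wt_nonneg⟩ : Game).profit p γ ≤ (⟨6, 2, 3, T_pos, color, len, wt, len_nonneg, len_le_T, wt_nonneg⟩ : Game).val p := by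
    intro p γ
    have hb : BddAbove {x : ℝ | ∃ γ' : (⟨6, 2, 3, T_pos, color, len, wt, len_nonneg, len_le_T, wt_nonneg⟩ : Game).Config, x = (⟨6, 2, 3, T_pos, color, len, wt, len_nonneg, len_le_T, wt_nonneg⟩ : Game).profit p γ'} := by
      refine ⟨8, ?_⟩
      rintro x ⟨γ', rfl⟩
      rw [profit_eq]
      split_ifs <;> linarith
    exact le_csSup hb ⟨γ, rfl⟩
  have ge_choice : ∀ (p : (⟨6, 2, 3, T_pos, color, len, wt, len_nonneg, len_le_T, wt_nonneg⟩ : Game).Profile) (γ : (⟨6, 2, 3, T_pos, color, len, wt, len_nonneg, len_le_T, wt_nonneg⟩ : Game).Config),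
      (⟨6, 2, 3, T_pos, color, len, wt, len_nonneg, len_le_T, wt_nonneg⟩ : Game).profit p γ ≤ (⟨6, 2, 3, T_pos, color, len, wt, len_nonneg, len_le_T, wt_nonneg⟩ : Game).profit p (M.choice p) := by
    intro p γ
    rw [M.choice_opt p]
    exact le_val p γ
  -- profit equals 4 when job 0 is covered
  have profit_cov0 : ∀ (p : (⟨6, 2, 3, T_pos, color, len, wt, len_nonneg, len_le_T, wt_nonneg⟩ : Game).Profile) (γ : (⟨6, 2, 3, T_pos, color, len, wt, len_nonneg, len_le_T, wt_nonneg⟩ : Game).Config), (⟨6, 2, 3, T_pos, color, len, wt, len_nonneg, len_le_T, wt_nonneg⟩ : Game).Covered p γ (0 : Fin 6) →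
      (⟨6, 2, 3, T_pos, color, len, wt, len_nonneg, len_le_T, wt_nonneg⟩ : Game).profit p γ = 4 := by
    intro p γ h
    rw [profit_eq, if_pos h, if_pos (cov0_1 p γ h),
      if_neg (cov0_not p γ 2 l2 rfl h), if_neg (cov0_not p γ 3 l3 (colj2 3 (by decide)) h),
      if_neg (cov0_not p γ 4 l4 (colj2 4 (by decide)) h),
      if_neg (cov0_not p γ 5 l5 (colj2 5 (by decide)) h)]
    norm_num
  by_cases h0 : (⟨6, 2, 3, T_pos, color, len, wt, len_nonneg, len_le_T, wt_nonneg⟩ : Game).Covered s (M.choice s) (0 : Fin 6)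
  · -- Case A : machine covers job 0; the player of color 1 deviates
    have u1s : (⟨6, 2, 3, T_pos, color, len, wt, len_nonneg, len_le_T, wt_nonneg⟩ : Game).utility M ((⟨6, 2, 3, T_pos, color, len, wt, len_nonneg, len_le_T, wt_nonneg⟩ : Game).color (2 : Fin 6)) s = 0 := by
      rw [utility_eq]
      rw [if_neg (fun h => cne h.1), if_neg (fun h => cne (c1.symm.trans h.1)),
        if_neg (fun h => cov0_not s (M.choice s) 2 l2 rfl h0 h.2),
        if_neg (fun h => cov0_not s (M.choice s) 3 l3 (colj2 3 (by decide)) h0 h.2),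
        if_neg (fun h => cov0_not s (M.choice s) 4 l4 (colj2 4 (by decide)) h0 h.2),
        if_neg (fun h => cov0_not s (M.choice s) 5 l5 (colj2 5 (by decide)) h0 h.2)]
      norm_num
    have hs1nn := s.start_nonneg (1 : Fin 6)
    have hs1le := s.start_le (1 : Fin 6)
    rw [l1, hTm] at hs1le
    set a : ℝ := if 1 ≤ s.start (1 : Fin 6) then 0 else s.start (1 : Fin 6) + 1 with ha
    have ha0 : 0 ≤ a := by rw [ha]; split <;> linarith
    have ha3 : a + (1 - ε) ≤ 3 := by rw [ha]; split <;> linarith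
    have hdisj : a + (1 - ε) ≤ s.start (1 : Fin 6) ∨ s.start (1 : Fin 6) + 1 ≤ a := by
      rw [ha]; split
      · left; rename_i hcase; linarith
      · right; linarith
    obtain ⟨s₂, hs₂⟩ : ∃ p : (⟨6, 2, 3, T_pos, color, len, wt, len_nonneg, len_le_T, wt_nonneg⟩ : Game).Profile,
        p.start = fun j : Fin 6 => if 2 ≤ (j : ℕ) then a else s.start j := by
      refine ⟨⟨fun j : Fin 6 => if 2 ≤ (j : ℕ) then a else s.start j, ?_, ?_⟩, rfl⟩
      · intro j
        show (0:ℝ) ≤ if 2 ≤ (j : ℕ) then a else s.start j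
        split
        · exact ha0
        · exact s.start_nonneg j
      · intro j
        show (if 2 ≤ (j : ℕ) then a else s.start j) + (⟨6, 2, 3, T_pos, color, len, wt, len_nonneg, len_le_T, wt_nonneg⟩ : Game).len j ≤ (⟨6, 2, 3, T_pos, color, len, wt, len_nonneg, len_le_T, wt_nonneg⟩ : Game).T
        split
        · rename_i hj
          have hlj : (⟨6, 2, 3, T_pos, color, len, wt, len_nonneg, len_le_T, wt_nonneg⟩ : Game).len j = 1 - ε := by
            show len j = 1 - ε
            rw [hlen' j, if_neg (show ¬ (j : ℕ) = 0 by omega),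
              if_neg (show ¬ (j : ℕ) = 1 by omega)]
          rw [hlj, hTm]; linarith
        · exact s.start_le j
    have hs₂1 : s₂.start (1 : Fin 6) = s.start (1 : Fin 6) := by
      rw [hs₂]; exact if_neg (by decide)
    have hs₂j : ∀ j : Fin 6, 2 ≤ (j : ℕ) → s₂.start j = a := by
      intro j hj; rw [hs₂]; exact if_pos hj
    have hcond : ∀ j, (⟨6, 2, 3, T_pos, color, len, wt, len_nonneg, len_le_T, wt_nonneg⟩ : Game).color j ≠ (⟨6, 2, 3, T_pos, color, len, wt, len_nonneg, len_le_T, wt_nonneg⟩ : Game).color (2 : Fin 6) → s₂.start j = s.start j := by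
      intro j hj
      rw [hs₂]
      refine if_neg ?_
      intro h2j
      exact hj (colj2 j h2j)
    set γ1 : (⟨6, 2, 3, T_pos, color, len, wt, len_nonneg, len_le_T, wt_nonneg⟩ : Game).Config :=
      fun t => if a ≤ t ∧ t < a + (1 - ε) then (⟨6, 2, 3, T_pos, color, len, wt, len_nonneg, len_le_T, wt_nonneg⟩ : Game).color (2 : Fin 6) else (⟨6, 2, 3, T_pos, color, len, wt, len_nonneg, len_le_T, wt_nonneg⟩ : Game).color (0 : Fin 6)
      with hγ1
    have hγ1in : ∀ t : ℝ, a ≤ t → t < a + (1 - ε) → γ1 t = (⟨6, 2, 3, T_pos, color, len, wt, len_nonneg, len_le_T, wt_nonneg⟩ : Game).color (2 : Fin 6) := by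
      intro t h1 h2; rw [hγ1]; exact if_pos ⟨h1, h2⟩
    have hγ1out : ∀ t : ℝ, t < a ∨ a + (1 - ε) ≤ t → γ1 t = (⟨6, 2, 3, T_pos, color, len, wt, len_nonneg, len_le_T, wt_nonneg⟩ : Game).color (0 : Fin 6) := by
      intro t h
      have hne : ¬ (a ≤ t ∧ t < a + (1 - ε)) := by
        rintro ⟨hh1, hh2⟩
        rcases h with h | h <;> linarith
      rw [hγ1]; exact if_neg hne
    have covε : ∀ j : Fin 6, 2 ≤ (j : ℕ) → (⟨6, 2, 3, T_pos, color, len, wt, len_nonneg, len_le_T, wt_nonneg⟩ : Game).len j = 1 - ε → (⟨6, 2, 3, T_pos, color, len, wt, len_nonneg, len_le_T, wt_nonneg⟩ : Game).Covered s₂ γ1 j := by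
      intro j hj hl t h1 h2
      rw [hs₂j j hj] at h1 h2
      rw [hl] at h2
      rw [hγ1in t h1 h2]
      exact (colj2 j hj).symm
    have cov1γ1 : (⟨6, 2, 3, T_pos, color, len, wt, len_nonneg, len_le_T, wt_nonneg⟩ : Game).Covered s₂ γ1 (1 : Fin 6) := by
      intro t h1 h2
      rw [hs₂1] at h1 h2
      rw [l1] at h2
      rw [c1]
      apply hγ1out
      rcases hdisj with h | h
      · right; linarith
      · left; linarith
    have ncov0γ1 : ¬ (⟨6, 2, 3, T_pos, color, len, wt, len_nonneg, len_le_T, wt_nonneg⟩ : Game).Covered s₂ γ1 (0 : Fin 6) := by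
      intro h
      have hh := cov0_all s₂ γ1 h a ha0 (by linarith)
      rw [hγ1in a le_rfl (by linarith)] at hh
      exact cne hh.symm
    have hprofγ1 : (⟨6, 2, 3, T_pos, color, len, wt, len_nonneg, len_le_T, wt_nonneg⟩ : Game).profit s₂ γ1 = 5 - 4 * ε := by
      rw [profit_eq, if_neg ncov0γ1, if_pos cov1γ1, if_pos (covε 2 (by decide) l2),
        if_pos (covε 3 (by decide) l3), if_pos (covε 4 (by decide) l4),
        if_pos (covε 5 (by decide) l5)]
      ring
    have hval2 : 5 - 4 * ε ≤ (⟨6, 2, 3, T_pos, color, len, wt, len_nonneg, len_le_T, wt_nonneg⟩ : Game).profit s₂ (M.choice s₂) := by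
      rw [← hprofγ1]; exact ge_choice s₂ γ1
    have hnc0 : ¬ (⟨6, 2, 3, T_pos, color, len, wt, len_nonneg, len_le_T, wt_nonneg⟩ : Game).Covered s₂ (M.choice s₂) (0 : Fin 6) := by
      intro h
      rw [profit_cov0 s₂ (M.choice s₂) h] at hval2
      linarith
    rw [profit_eq, if_neg hnc0] at hval2
    have b1 : (if (⟨6, 2, 3, T_pos, color, len, wt, len_nonneg, len_le_T, wt_nonneg⟩ : Game).Covered s₂ (M.choice s₂) (1 : Fin 6) then (1:ℝ) else 0) ≤ 1 := by
      split <;> linarith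
    have b2 : (if (⟨6, 2, 3, T_pos, color, len, wt, len_nonneg, len_le_T, wt_nonneg⟩ : Game).Covered s₂ (M.choice s₂) (2 : Fin 6) then 1 - ε else 0) ≤ 1 - ε := by
      split <;> linarith
    have b3 : (if (⟨6, 2, 3, T_pos, color, len, wt, len_nonneg, len_le_T, wt_nonneg⟩ : Game).Covered s₂ (M.choice s₂) (3 : Fin 6) then 1 - ε else 0) ≤ 1 - ε := by
      split <;> linarith
    have b4 : (if (⟨6, 2, 3, T_pos, color, len, wt, len_nonneg, len_le_T, wt_nonneg⟩ : Game).Covered s₂ (M.choice s₂) (4 : Fin 6) then 1 - ε else 0) ≤ 1 - ε := by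
      split <;> linarith
    have b5 : (if (⟨6, 2, 3, T_pos, color, len, wt, len_nonneg, len_le_T, wt_nonneg⟩ : Game).Covered s₂ (M.choice s₂) (5 : Fin 6) then 1 - ε else 0) ≤ 1 - ε := by
      split <;> linarith
    have hc2 : (⟨6, 2, 3, T_pos, color, len, wt, len_nonneg, len_le_T, wt_nonneg⟩ : Game).Covered s₂ (M.choice s₂) (2 : Fin 6) := by
      by_contra h; rw [if_neg h] at hval2; linarith
    have hc3 : (⟨6, 2, 3, T_pos, color, len, wt, len_nonneg, len_le_T, wt_nonneg⟩ : Game).Covered s₂ (M.choice s₂) (3 : Fin 6) := by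
      by_contra h; rw [if_neg h] at hval2; linarith
    have hc4 : (⟨6, 2, 3, T_pos, color, len, wt, len_nonneg, len_le_T, wt_nonneg⟩ : Game).Covered s₂ (M.choice s₂) (4 : Fin 6) := by
      by_contra h; rw [if_neg h] at hval2; linarith
    have hc5 : (⟨6, 2, 3, T_pos, color, len, wt, len_nonneg, len_le_T, wt_nonneg⟩ : Game).Covered s₂ (M.choice s₂) (5 : Fin 6) := by
      by_contra h; rw [if_neg h] at hval2; linarith
    have u1s₂ : (⟨6, 2, 3, T_pos, color, len, wt, len_nonneg, len_le_T, wt_nonneg⟩ : Game).utility M ((⟨6, 2, 3, T_pos, color, len, wt, len_nonneg, len_le_T, wt_nonneg⟩ : Game).color (2 : Fin 6)) s₂ = 4 * (1 - ε) := by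
      rw [utility_eq]
      rw [if_neg (fun h => cne h.1), if_neg (fun h => cne (c1.symm.trans h.1)),
        if_pos ⟨rfl, hc2⟩, if_pos ⟨colj2 3 (by decide), hc3⟩,
        if_pos ⟨colj2 4 (by decide), hc4⟩, if_pos ⟨colj2 5 (by decide), hc5⟩]
      ring
    have hfin := hNE ((⟨6, 2, 3, T_pos, color, len, wt, len_nonneg, len_le_T, wt_nonneg⟩ : Game).color (2 : Fin 6)) s₂ hcond
    rw [u1s, u1s₂] at hfin
    linarith
  · -- Case B : machine does not cover job 0; the player of color 0 deviates
    have u0s : (⟨6, 2, 3, T_pos, color, len, wt, len_nonneg, len_le_T, wt_nonneg⟩ : Game).utility M ((⟨6, 2, 3, T_pos, color, len, wt, len_nonneg, len_le_T, wt_nonneg⟩ : Game).color (0 : Fin 6)) s ≤ 1 := by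
      rw [utility_eq]
      rw [if_neg (fun h => h0 h.2),
        if_neg (show ¬((⟨6, 2, 3, T_pos, color, len, wt, len_nonneg, len_le_T, wt_nonneg⟩ : Game).color (2 : Fin 6) = (⟨6, 2, 3, T_pos, color, len, wt, len_nonneg, len_le_T, wt_nonneg⟩ : Game).color (0 : Fin 6) ∧
          (⟨6, 2, 3, T_pos, color, len, wt, len_nonneg, len_le_T, wt_nonneg⟩ : Game).Covered s (M.choice s) (2 : Fin 6)) from fun h => cne h.1.symm),
        if_neg (show ¬((⟨6, 2, 3, T_pos, color, len, wt, len_nonneg, len_le_T, wt_nonneg⟩ : Game).color (3 : Fin 6) = (⟨6, 2, 3, T_pos, color, len, wt, len_nonneg, len_le_T, wt_nonneg⟩ : Game).color (0 : Fin 6) ∧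
          (⟨6, 2, 3, T_pos, color, len, wt, len_nonneg, len_le_T, wt_nonneg⟩ : Game).Covered s (M.choice s) (3 : Fin 6)) from
          fun h => cne (((colj2 3 (by decide)).symm.trans h.1).symm)),
        if_neg (show ¬((⟨6, 2, 3, T_pos, color, len, wt, len_nonneg, len_le_T, wt_nonneg⟩ : Game).color (4 : Fin 6) = (⟨6, 2, 3, T_pos, color, len, wt, len_nonneg, len_le_T, wt_nonneg⟩ : Game).color (0 : Fin 6) ∧
          (⟨6, 2, 3, T_pos, color, len, wt, len_nonneg, len_le_T, wt_nonneg⟩ : Game).Covered s (M.choice s) (4 : Fin 6)) from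
          fun h => cne (((colj2 4 (by decide)).symm.trans h.1).symm)),
        if_neg (show ¬((⟨6, 2, 3, T_pos, color, len, wt, len_nonneg, len_le_T, wt_nonneg⟩ : Game).color (5 : Fin 6) = (⟨6, 2, 3, T_pos, color, len, wt, len_nonneg, len_le_T, wt_nonneg⟩ : Game).color (0 : Fin 6) ∧
          (⟨6, 2, 3, T_pos, color, len, wt, len_nonneg, len_le_T, wt_nonneg⟩ : Game).Covered s (M.choice s) (5 : Fin 6)) from
          fun h => cne (((colj2 5 (by decide)).symm.trans h.1).symm))]
      have hb : (if (⟨6, 2, 3, T_pos, color, len, wt, len_nonneg, len_le_T, wt_nonneg⟩ : Game).color (1 : Fin 6) = (⟨6, 2, 3, T_pos, color, len, wt, len_nonneg, len_le_T, wt_nonneg⟩ : Game).color (0 : Fin 6) ∧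
          (⟨6, 2, 3, T_pos, color, len, wt, len_nonneg, len_le_T, wt_nonneg⟩ : Game).Covered s (M.choice s) (1 : Fin 6) then (1:ℝ) else 0) ≤ 1 := by
        split <;> linarith
      linarith
    have hs2nn := s.start_nonneg (2 : Fin 6)
    have hs2le := s.start_le (2 : Fin 6)
    rw [l2, hTm] at hs2le
    set a : ℝ := min (s.start (2 : Fin 6)) 2 with ha
    have ha0 : 0 ≤ a := le_min hs2nn (by norm_num)
    have ha2 : a ≤ 2 := min_le_right _ _
    have has2 : a ≤ s.start (2 : Fin 6) := min_le_left _ _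
    have ha1 : s.start (2 : Fin 6) < a + 1 := by
      rcases le_or_gt (s.start (2 : Fin 6)) 2 with h | h
      · rw [ha, min_eq_left h]; linarith
      · rw [ha, min_eq_right (le_of_lt h)]; linarith
    obtain ⟨s₁, hs₁⟩ : ∃ p : (⟨6, 2, 3, T_pos, color, len, wt, len_nonneg, len_le_T, wt_nonneg⟩ : Game).Profile,
        p.start = fun j : Fin 6 => if (j : ℕ) = 1 then a else s.start j := by
      refine ⟨⟨fun j : Fin 6 => if (j : ℕ) = 1 then a else s.start j, ?_, ?_⟩, rfl⟩
      · intro j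
        show (0:ℝ) ≤ if (j : ℕ) = 1 then a else s.start j
        split
        · exact ha0
        · exact s.start_nonneg j
      · intro j
        show (if (j : ℕ) = 1 then a else s.start j) + (⟨6, 2, 3, T_pos, color, len, wt, len_nonneg, len_le_T, wt_nonneg⟩ : Game).len j ≤ (⟨6, 2, 3, T_pos, color, len, wt, len_nonneg, len_le_T, wt_nonneg⟩ : Game).T
        split
        · rename_i hj
          have hlj : (⟨6, 2, 3, T_pos, color, len, wt, len_nonneg, len_le_T, wt_nonneg⟩ : Game).len j = 1 := by
            show len j = 1
            rw [hlen' j, if_neg (show ¬ (j : ℕ) = 0 by omega), if_pos hj]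
          rw [hlj, hTm]; linarith
        · exact s.start_le j
    have hs₁1 : s₁.start (1 : Fin 6) = a := by
      rw [hs₁]; exact if_pos (by decide)
    have hs₁j : ∀ j : Fin 6, (j : ℕ) ≠ 1 → s₁.start j = s.start j := by
      intro j hj; rw [hs₁]; exact if_neg hj
    have hcond : ∀ j, (⟨6, 2, 3, T_pos, color, len, wt, len_nonneg, len_le_T, wt_nonneg⟩ : Game).color j ≠ (⟨6, 2, 3, T_pos, color, len, wt, len_nonneg, len_le_T, wt_nonneg⟩ : Game).color (0 : Fin 6) → s₁.start j = s.start j := by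
      intro j hj
      apply hs₁j
      intro h1
      apply hj
      rw [← c1]
      apply Fin.ext
      show ((color j : Fin 2) : ℕ) = ((color 1 : Fin 2) : ℕ)
      rw [hcol' j, hcol' 1, if_pos (show (j : ℕ) < 2 by omega)]
      decide
    have hcov0c : (⟨6, 2, 3, T_pos, color, len, wt, len_nonneg, len_le_T, wt_nonneg⟩ : Game).Covered s₁ (fun _ => (⟨6, 2, 3, T_pos, color, len, wt, len_nonneg, len_le_T, wt_nonneg⟩ : Game).color (0 : Fin 6)) (0 : Fin 6) := by
      intro t _ _; rfl
    have hval1 : (4:ℝ) ≤ (⟨6, 2, 3, T_pos, color, len, wt, len_nonneg, len_le_T, wt_nonneg⟩ : Game).profit s₁ (M.choice s₁) := by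
      rw [← profit_cov0 s₁ (fun _ => (⟨6, 2, 3, T_pos, color, len, wt, len_nonneg, len_le_T, wt_nonneg⟩ : Game).color (0 : Fin 6)) hcov0c]
      exact ge_choice s₁ (fun _ => (⟨6, 2, 3, T_pos, color, len, wt, len_nonneg, len_le_T, wt_nonneg⟩ : Game).color (0 : Fin 6))
    have hnot12 : ¬ ((⟨6, 2, 3, T_pos, color, len, wt, len_nonneg, len_le_T, wt_nonneg⟩ : Game).Covered s₁ (M.choice s₁) (1 : Fin 6) ∧
        (⟨6, 2, 3, T_pos, color, len, wt, len_nonneg, len_le_T, wt_nonneg⟩ : Game).Covered s₁ (M.choice s₁) (2 : Fin 6)) := by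
      rintro ⟨hh1, hh2⟩
      have e1 := hh1 (s.start (2 : Fin 6)) (by rw [hs₁1]; exact has2)
        (by rw [hs₁1, l1]; linarith)
      have e2 := hh2 (s.start (2 : Fin 6)) (by rw [hs₁j 2 (by decide)])
        (by rw [hs₁j 2 (by decide), l2]; linarith)
      rw [e1, c1] at e2
      exact cne e2
    have hcovm0 : (⟨6, 2, 3, T_pos, color, len, wt, len_nonneg, len_le_T, wt_nonneg⟩ : Game).Covered s₁ (M.choice s₁) (0 : Fin 6) := by
      by_contra hnc
      rw [profit_eq, if_neg hnc] at hval1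
      have b3 : (if (⟨6, 2, 3, T_pos, color, len, wt, len_nonneg, len_le_T, wt_nonneg⟩ : Game).Covered s₁ (M.choice s₁) (3 : Fin 6) then 1 - ε else 0) ≤ 1 - ε := by
        split <;> linarith
      have b4 : (if (⟨6, 2, 3, T_pos, color, len, wt, len_nonneg, len_le_T, wt_nonneg⟩ : Game).Covered s₁ (M.choice s₁) (4 : Fin 6) then 1 - ε else 0) ≤ 1 - ε := by
        split <;> linarith
      have b5 : (if (⟨6, 2, 3, T_pos, color, len, wt, len_nonneg, len_le_T, wt_nonneg⟩ : Game).Covered s₁ (M.choice s₁) (5 : Fin 6) then 1 - ε else 0) ≤ 1 - ε := by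
        split <;> linarith
      by_cases hcc1 : (⟨6, 2, 3, T_pos, color, len, wt, len_nonneg, len_le_T, wt_nonneg⟩ : Game).Covered s₁ (M.choice s₁) (1 : Fin 6)
      · have hcc2 : ¬ (⟨6, 2, 3, T_pos, color, len, wt, len_nonneg, len_le_T, wt_nonneg⟩ : Game).Covered s₁ (M.choice s₁) (2 : Fin 6) := fun h => hnot12 ⟨hcc1, h⟩
        rw [if_pos hcc1, if_neg hcc2] at hval1
        linarith
      · rw [if_neg hcc1] at hval1
        have b2 : (if (⟨6, 2, 3, T_pos, color, len, wt, len_nonneg, len_le_T, wt_nonneg⟩ : Game).Covered s₁ (M.choice s₁) (2 : Fin 6) then 1 - ε else 0) ≤ 1 - ε := by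
          split <;> linarith
        linarith
    have hcovm1 : (⟨6, 2, 3, T_pos, color, len, wt, len_nonneg, len_le_T, wt_nonneg⟩ : Game).Covered s₁ (M.choice s₁) (1 : Fin 6) := cov0_1 s₁ (M.choice s₁) hcovm0
    have u0s₁ : (⟨6, 2, 3, T_pos, color, len, wt, len_nonneg, len_le_T, wt_nonneg⟩ : Game).utility M ((⟨6, 2, 3, T_pos, color, len, wt, len_nonneg, len_le_T, wt_nonneg⟩ : Game).color (0 : Fin 6)) s₁ = 4 := by
      rw [utility_eq]
      rw [if_pos ⟨rfl, hcovm0⟩, if_pos ⟨c1, hcovm1⟩,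
        if_neg (fun h => cne h.1.symm),
        if_neg (fun h => cne (((colj2 3 (by decide)).symm.trans h.1).symm)),
        if_neg (fun h => cne (((colj2 4 (by decide)).symm.trans h.1).symm)),
        if_neg (fun h => cne (((colj2 5 (by decide)).symm.trans h.1).symm))]
      norm_num
    have hfin := hNE ((⟨6, 2, 3, T_pos, color, len, wt, len_nonneg, len_le_T, wt_nonneg⟩ : Game).color (0 : Fin 6)) s₁ hcond
    rw [u0s₁] at hfin
    linarith
end

section
/- For every interval scheduling game with c colors and every strategy profile σ, val(OPT) ≤ c·val(σ). In particular, for every tie-breaking rule M and every Nash equilibrium σ with respect to M, val(OPT) ≤ c·val(σ), so the price of anarchy is at most c. -/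
open Classical

/-- For every game with `c` colors and every strategy profile,
`val(OPT) ≤ c · val(σ)`; in particular this holds at every Nash equilibrium,
so the price of anarchy is at most `c`. -/
theorem PoA_le_c (G : Game) :
    (∀ s : G.Profile, G.valOPT ≤ (G.c : ℝ) * G.val s) ∧
    (∀ (M : G.TieBreak) (s : G.Profile), G.IsNE M s →
      G.valOPT ≤ (G.c : ℝ) * G.val s) := by
  have main : ∀ s : G.Profile, G.valOPT ≤ (G.c : ℝ) * G.val s := by
    intro s
    by_cases hc : G.c = 0
    · -- no colors: no configurations, all values are 0
      have hval : ∀ s' : G.Profile, G.val s' = 0 := by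
        intro s'
        have : {x : ℝ | ∃ γ : G.Config, x = G.profit s' γ} = ∅ := by
          ext x
          simp only [Set.mem_setOf_eq, Set.mem_empty_iff_false, iff_false]
          rintro ⟨γ, -⟩
          have h0 := γ 0; rw [hc] at h0; exact h0.elim0
        simp [Game.val, this, Real.sSup_empty]
      have hopt : G.valOPT ≤ 0 := by
        apply Real.sSup_le _ le_rfl
        rintro x ⟨s', rfl⟩
        exact (hval s').le
      simpa [hval s, hc] using hopt
    · set W : ℝ := ∑ j : Fin G.n, G.wt j with hW
      have hW0 : 0 ≤ W := Finset.sum_nonneg fun j _ => G.wt_nonneg j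
      have hprofit_le : ∀ (s' : G.Profile) (γ : G.Config), G.profit s' γ ≤ W := by
        intro s' γ
        apply Finset.sum_le_sum
        intro j _
        split <;> simp [G.wt_nonneg j]
      have hval_le : ∀ s' : G.Profile, G.val s' ≤ W := by
        intro s'
        apply Real.sSup_le _ hW0
        rintro x ⟨γ, rfl⟩
        exact hprofit_le s' γ
      have hopt_le : G.valOPT ≤ W := by
        apply Real.sSup_le _ hW0
        rintro x ⟨s', rfl⟩
        exact hval_le s'
      have hbdd : BddAbove {x : ℝ | ∃ γ : G.Config, x = G.profit s γ} := by
        refine ⟨W, ?_⟩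
        rintro x ⟨γ, rfl⟩
        exact hprofit_le s γ
      have hcolor : ∀ i : Fin G.c,
          (∑ j : Fin G.n, if G.color j = i then G.wt j else 0) ≤ G.val s := by
        intro i
        have h1 : (∑ j : Fin G.n, if G.color j = i then G.wt j else 0)
            ≤ G.profit s (fun _ => i) := by
          apply Finset.sum_le_sum
          intro j _
          by_cases hj : G.color j = i
          · have hcov : G.Covered s (fun _ => i) j := fun t _ _ => hj.symm
            simp [hj, hcov]
          · rw [if_neg hj]
            split
            · exact G.wt_nonneg j
            · exact le_rfl
        exact h1.trans (le_csSup hbdd ⟨fun _ => i, rfl⟩)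
      have hWeq : W = ∑ i : Fin G.c, ∑ j : Fin G.n,
          if G.color j = i then G.wt j else 0 := by
        rw [Finset.sum_comm]
        apply Finset.sum_congr rfl
        intro j _
        simp [Finset.sum_ite_eq]
      have : W ≤ (G.c : ℝ) * G.val s := by
        rw [hWeq]
        calc (∑ i : Fin G.c, ∑ j : Fin G.n, if G.color j = i then G.wt j else 0)
            ≤ ∑ _i : Fin G.c, G.val s := Finset.sum_le_sum fun i _ => hcolor i
          _ = (G.c : ℝ) * G.val s := by simp [Finset.sum_const, mul_comm]
      exact hopt_le.trans this
  exact ⟨main, fun M s _ => main s⟩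
end

section
/- Let a_1,…,a_n be positive integers with Σ_i a_i = 2T, each a_i ≤ T, and let 0 < ε < 1. Consider the interval scheduling game with horizon T and c = 2 in which S_1 consists of n jobs, the i-th of length a_i and weight 1, together with one additional job of length T and weight 1 + ε, and S_2 consists of a single job of length 1/n and weight 3. Then for every tie-breaking rule M, this game has a Nash equilibrium with respect to M if and only if there exists a subset A' ⊆ {1,…,n} with Σ_{i∈A'} a_i = T. -/
open Classical

/-!
Let `K` be the number of jobs of lengths `a i` that overlap the short job. An optimal configuration
either serves the first player throughout (profit `n + 1 + ε`) or serves the short job together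
with the first player's jobs disjoint from it (profit `n + 3 - K`); as `0 < ε < 1`, the short job
is served exactly when `K ≤ 1`. In an equilibrium `K ≥ 2`, since otherwise the first player piles
its jobs onto the short job, and the second player has no better place: every window
`[t, t + 1/n) ⊆ [0, T)` meets two of the intervals `[σ i, σ i + a i)`. Conversely such a placement
is an equilibrium, and a partition yields one by laying each half end to end from `0`.

To extract a partition from such a placement, pass to the grid `k / n`, where the intervals
become integer intervals covering every grid point twice. They split greedily into two families
each covering every grid point; a family of fewer than `n` intervals doing so has total length
more than `T - 1`, hence at least `T`, and the total `2 T` forces equality.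
-/

open Finset

section IntervalCover

variable {ι : Type*} (lo up : ι → ℕ)

def CoversBelow (A : Finset ι) (m : ℕ) : Prop :=
  ∀ k < m, ∃ i ∈ A, k ∈ Ico (lo i) (up i)

variable {lo up}

theorem CoversBelow.succ {A : Finset ι} {m : ℕ} (hA : CoversBelow lo up A m)
    (hm : ∃ i ∈ A, m ∈ Ico (lo i) (up i)) : CoversBelow lo up A (m + 1) := by
  intro k hk
  rcases Nat.lt_succ_iff_lt_or_eq.1 hk with hk | rfl
  exacts [hA k hk, hm]

theorem CoversBelow.mono {A B : Finset ι} {m : ℕ} (hA : CoversBelow lo up A m) (hAB : A ⊆ B) :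
    CoversBelow lo up B m := fun k hk ↦
  let ⟨i, hi, hk⟩ := hA k hk
  ⟨i, hAB hi, hk⟩

theorem CoversBelow.le_sum {A : Finset ι} {m : ℕ} (hA : CoversBelow lo up A m) :
    m ≤ ∑ i ∈ A, (up i - lo i) :=
  calc m = #(range m) := (card_range m).symm
    _ ≤ #(A.biUnion fun i ↦ Ico (lo i) (up i)) := card_le_card fun k hk ↦ by
        obtain ⟨i, hi, hk⟩ := hA k (mem_range.1 hk)
        exact mem_biUnion.2 ⟨i, hi, hk⟩
    _ ≤ ∑ i ∈ A, #(Ico (lo i) (up i)) := card_biUnion_le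
    _ = ∑ i ∈ A, (up i - lo i) := by simp only [Nat.card_Ico]

/-- If `A` misses `m`, give `A` the interval `x` through `m` that starts later and `B` the other
one, `y`: below `m`, whatever `x` covered for `B` is covered by `y`. -/
theorem exists_disjoint_coversBelow_succ [DecidableEq ι] {A B : Finset ι} {m : ℕ}
    (hAB : Disjoint A B) (hA : CoversBelow lo up A m) (hB : CoversBelow lo up B m)
    (hAm : ∀ i ∈ A, m ∉ Ico (lo i) (up i))
    (hm : ∃ x y, x ≠ y ∧ m ∈ Ico (lo x) (up x) ∧ m ∈ Ico (lo y) (up y)) :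
    ∃ A' B' : Finset ι, Disjoint A' B' ∧ CoversBelow lo up A' (m + 1) ∧
      CoversBelow lo up B' (m + 1) := by
  obtain ⟨x, y, hxy, hx, hy⟩ := hm
  wlog hlo : lo y ≤ lo x generalizing x y
  · exact this y x hxy.symm hy hx (le_of_not_ge hlo)
  have hxA : x ∉ A := fun h ↦ hAm x h hx
  have hyA : y ∉ A := fun h ↦ hAm y h hy
  refine ⟨insert x A, insert y (B.erase x), ?_, ?_, ?_⟩
  · simp only [disjoint_insert_left, disjoint_insert_right, mem_insert, mem_erase, not_or, not_and]
    exact ⟨⟨hxy.symm, hyA⟩, fun h ↦ absurd rfl h, hAB.mono_right (erase_subset x B)⟩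
  · exact (hA.mono (subset_insert x A)).succ ⟨x, mem_insert_self x A, hx⟩
  · refine CoversBelow.succ (fun k hk ↦ ?_) ⟨y, mem_insert_self y _, hy⟩
    obtain ⟨i, hi, hik⟩ := hB k hk
    by_cases hix : i = x
    · subst hix
      simp only [mem_Ico] at hik hy ⊢
      exact ⟨y, mem_insert_self y _, by omega, by omega⟩
    · exact ⟨i, mem_insert_of_mem (mem_erase.2 ⟨hix, hi⟩), hik⟩

theorem exists_disjoint_coversBelow_of_forall_two [DecidableEq ι] (m : ℕ)
    (h : ∀ k < m, ∃ x y, x ≠ y ∧ k ∈ Ico (lo x) (up x) ∧ k ∈ Ico (lo y) (up y)) :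
    ∃ A B : Finset ι, Disjoint A B ∧ CoversBelow lo up A m ∧ CoversBelow lo up B m := by
  induction m with
  | zero => exact ⟨∅, ∅, disjoint_empty_left _, fun k hk ↦ absurd hk k.not_lt_zero,
      fun k hk ↦ absurd hk k.not_lt_zero⟩
  | succ m ih =>
    obtain ⟨A, B, hAB, hA, hB⟩ := ih fun k hk ↦ h k (by omega)
    have hm := h m m.lt_add_one
    by_cases hAm : ∀ i ∈ A, m ∉ Ico (lo i) (up i)
    · exact exists_disjoint_coversBelow_succ hAB hA hB hAm hm
    by_cases hBm : ∀ i ∈ B, m ∉ Ico (lo i) (up i)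
    · obtain ⟨B', A', hBA', hB', hA'⟩ := exists_disjoint_coversBelow_succ hAB.symm hB hA hBm hm
      exact ⟨A', B', hBA'.symm, hA', hB'⟩
    push Not at hAm hBm
    exact ⟨A, B, hAB, hA.succ hAm, hB.succ hBm⟩

end IntervalCover

section Windows

variable {n : ℕ} (a : Fin n → ℕ) (T : ℕ)

noncomputable def overlaps (σ : Fin n → ℝ) (t : ℝ) : Finset (Fin n) :=
  {i | t < σ i + a i ∧ σ i < t + 1 / n}

def Blocks (σ : Fin n → ℝ) : Prop :=
  ∀ t : ℝ, 0 ≤ t → t + 1 / n ≤ T → 2 ≤ #(overlaps a σ t)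

variable {a T}

theorem mem_overlaps {σ : Fin n → ℝ} {t : ℝ} {i : Fin n} :
    i ∈ overlaps a σ t ↔ t < σ i + a i ∧ σ i < t + 1 / n := by
  simp [overlaps]

theorem mem_overlaps_of_mem_Ico {σ : Fin n → ℝ} {t : ℝ} {i : Fin n} (hn : 0 < n)
    (h : t ∈ Set.Ico (σ i) (σ i + a i)) : i ∈ overlaps a σ t := by
  have : (0 : ℝ) < 1 / n := by positivity
  exact mem_overlaps.2 ⟨h.2, by linarith [h.1]⟩

/- The integer interval `[⌊n σ i⌋, ⌈n σ i⌉ + n a i)` contains every grid point `k` whose window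
`[k / n, (k + 1) / n)` meets `[σ i, σ i + a i)`, and has at most `n a i + 1` points. -/

noncomputable def cellLo (σ : Fin n → ℝ) (i : Fin n) : ℕ := ⌊(n : ℝ) * σ i⌋₊

noncomputable def cellUp (a : Fin n → ℕ) (σ : Fin n → ℝ) (i : Fin n) : ℕ :=
  ⌈(n : ℝ) * σ i⌉₊ + n * a i

theorem mem_Ico_cell_of_mem_overlaps {σ : Fin n → ℝ} {i : Fin n} {k : ℕ} (hn : 0 < n)
    (hσ : 0 ≤ σ i) (h : i ∈ overlaps a σ (k / n)) : k ∈ Ico (cellLo σ i) (cellUp a σ i) := by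
  have hn' : (0 : ℝ) < n := by exact_mod_cast hn
  obtain ⟨h1, h2⟩ := mem_overlaps.1 h
  rw [← add_div, lt_div_iff₀ hn'] at h2
  rw [div_lt_iff₀ hn'] at h1
  rw [mem_Ico, cellLo, cellUp, ← Nat.lt_add_one_iff, Nat.floor_lt (by positivity)]
  refine ⟨by push_cast; linarith, ?_⟩
  have := Nat.le_ceil ((n : ℝ) * σ i)
  exact_mod_cast (show (k : ℝ) < ⌈(n : ℝ) * σ i⌉₊ + n * a i by linarith)

theorem cellUp_sub_cellLo_le (σ : Fin n → ℝ) (i : Fin n) :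
    cellUp a σ i - cellLo σ i ≤ n * a i + 1 := by
  have := Nat.ceil_le_floor_add_one ((n : ℝ) * σ i)
  rw [cellUp, cellLo]
  omega

theorem forall_two_cells_of_blocks {σ : Fin n → ℝ} (hn : 0 < n) (hσ : ∀ i, 0 ≤ σ i)
    (hb : Blocks a T σ) : ∀ k < n * T, ∃ x y, x ≠ y ∧ k ∈ Ico (cellLo σ x) (cellUp a σ x) ∧
      k ∈ Ico (cellLo σ y) (cellUp a σ y) := by
  intro k hk
  have hn' : (0 : ℝ) < n := by exact_mod_cast hn
  have hkT : (k : ℝ) / n + 1 / n ≤ T := by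
    rw [← add_div, div_le_iff₀ hn']
    exact_mod_cast (show k + 1 ≤ T * n by rw [mul_comm]; exact hk)
  obtain ⟨x, hx, y, hy, hxy⟩ := one_lt_card.1 (hb _ (by positivity) hkT)
  exact ⟨x, y, hxy, mem_Ico_cell_of_mem_overlaps hn (hσ x) hx,
    mem_Ico_cell_of_mem_overlaps hn (hσ y) hy⟩

/-- The slack of one grid point per interval is absorbed because fewer than `n` intervals
are used. -/
theorem le_sum_of_coversBelow_cells {σ : Fin n → ℝ} {A : Finset (Fin n)}
    (hA : CoversBelow (cellLo σ) (cellUp a σ) A (n * T)) (hAn : #A < n) :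
    T ≤ ∑ i ∈ A, a i := by
  have key : n * T < n * (∑ i ∈ A, a i + 1) :=
    calc n * T ≤ ∑ i ∈ A, (cellUp a σ i - cellLo σ i) := hA.le_sum
      _ ≤ ∑ i ∈ A, (n * a i + 1) := sum_le_sum fun i _ ↦ cellUp_sub_cellLo_le σ i
      _ = n * ∑ i ∈ A, a i + #A := by rw [sum_add_distrib, mul_sum, card_eq_sum_ones]
      _ < n * (∑ i ∈ A, a i + 1) := by rw [mul_add_one]; omega
  exact Nat.lt_add_one_iff.1 (Nat.lt_of_mul_lt_mul_left key)

theorem exists_sum_eq_of_blocks {σ : Fin n → ℝ} (hsum : ∑ i, a i = 2 * T) (hσ : ∀ i, 0 ≤ σ i)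
    (hb : Blocks a T σ) : ∃ A : Finset (Fin n), ∑ i ∈ A, a i = T := by
  rcases Nat.eq_zero_or_pos T with rfl | hT
  · exact ⟨∅, sum_empty⟩
  have hn : 0 < n := Nat.pos_of_ne_zero fun hn ↦ by
    subst hn
    simp only [univ_eq_empty, sum_empty] at hsum
    omega
  obtain ⟨A, B, hAB, hA, hB⟩ :=
    exists_disjoint_coversBelow_of_forall_two _ (forall_two_cells_of_blocks hn hσ hb)
  have hAc : CoversBelow (cellLo σ) (cellUp a σ) Aᶜ (n * T) :=
    hB.mono (Finset.subset_compl_iff_disjoint_left.2 hAB)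
  have hne : ∀ C : Finset (Fin n), CoversBelow (cellLo σ) (cellUp a σ) C (n * T) → C.Nonempty :=
    fun C hC ↦ let ⟨i, hi, _⟩ := hC 0 (Nat.mul_pos hn hT); ⟨i, hi⟩
  have hcard : #A + #Aᶜ = n := by rw [card_add_card_compl, Fintype.card_fin]
  have hA' := le_sum_of_coversBelow_cells hA (by have := (hne _ hAc).card_pos; omega)
  have hAc' := le_sum_of_coversBelow_cells hAc (by have := (hne _ hA).card_pos; omega)
  have := sum_add_sum_compl A a
  exact ⟨A, by omega⟩

end Windows

section Packing

variable {ι : Type*} [LinearOrder ι] (a : ι → ℕ)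

def prefixSum (B : Finset ι) (i : ι) : ℕ := ∑ j ∈ B with j < i, a j

variable {a}

theorem prefixSum_add_le {B : Finset ι} {i : ι} (hi : i ∈ B) :
    prefixSum a B i + a i ≤ ∑ j ∈ B, a j := by
  rw [prefixSum, ← sum_filter_add_sum_filter_not B (· < i)]
  exact Nat.add_le_add_left (single_le_sum (fun _ _ ↦ Nat.zero_le _)
    (mem_filter.2 ⟨hi, lt_irrefl i⟩)) _

theorem exists_mem_Ico_prefixSum (B : Finset ι) {t : ℝ} (ht0 : 0 ≤ t)
    (ht : t < ∑ j ∈ B, a j) :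
    ∃ i ∈ B, t ∈ Set.Ico (prefixSum a B i : ℝ) (prefixSum a B i + a i) := by
  induction B using Finset.induction_on_max with
  | empty => simp only [sum_empty, Nat.cast_zero] at ht; linarith
  | insert x B hlt ih =>
    have hxB : x ∉ B := fun h ↦ lt_irrefl x (hlt x h)
    have hB : ∀ i ∈ B, prefixSum a (insert x B) i = prefixSum a B i := fun i hi ↦ by
      rw [prefixSum, prefixSum, filter_insert, if_neg (not_lt.2 (hlt i hi).le)]
    have hx : prefixSum a (insert x B) x = ∑ j ∈ B, a j := by
      rw [prefixSum, filter_insert, if_neg (lt_irrefl x), filter_true_of_mem hlt]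
    rw [sum_insert hxB, Nat.cast_add] at ht
    by_cases htB : t < ∑ j ∈ B, a j
    · obtain ⟨i, hi, hti⟩ := ih (by exact_mod_cast htB)
      exact ⟨i, mem_insert_of_mem hi, by rwa [hB i hi]⟩
    · refine ⟨x, mem_insert_self x B, ?_⟩
      rw [hx, Set.mem_Ico]
      exact ⟨not_lt.1 htB, by rw [add_comm]; exact ht⟩

end Packing

theorem exists_blocks_of_sum_eq {n T : ℕ} {a : Fin n → ℕ} (hn : 0 < n)
    (hsum : ∑ i, a i = 2 * T) {A : Finset (Fin n)} (hA : ∑ i ∈ A, a i = T) :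
    ∃ σ : Fin n → ℝ, (∀ i, 0 ≤ σ i ∧ σ i + a i ≤ T) ∧ Blocks a T σ := by
  have hAc : ∑ i ∈ Aᶜ, a i = T := by have := sum_add_sum_compl A a; omega
  let half : Fin n → Finset (Fin n) := fun i ↦ if i ∈ A then A else Aᶜ
  have hhalf : ∀ i, i ∈ half i ∧ ∑ j ∈ half i, a j = T := fun i ↦ by
    by_cases hi : i ∈ A <;> simp [half, hi, hA, hAc]
  let σ : Fin n → ℝ := fun i ↦ prefixSum a (half i) i
  refine ⟨σ, fun i ↦ ⟨Nat.cast_nonneg _, ?_⟩, fun t ht0 htT ↦ ?_⟩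
  · show (prefixSum a (half i) i : ℝ) + a i ≤ T
    exact_mod_cast (hhalf i).2 ▸ prefixSum_add_le (hhalf i).1
  have htT' : t < T := by linarith [show (0 : ℝ) < 1 / n by positivity]
  have hmeet : ∀ B, ∑ j ∈ B, a j = T → (∀ i ∈ B, half i = B) → ∃ i ∈ B, i ∈ overlaps a σ t := by
    intro B hB hhalfB
    obtain ⟨i, hi, hti⟩ := exists_mem_Ico_prefixSum B ht0 (by rwa [hB])
    exact ⟨i, hi, mem_overlaps_of_mem_Ico hn (by simpa only [σ, hhalfB i hi] using hti)⟩
  obtain ⟨i, hiA, hi⟩ := hmeet A hA fun i hi ↦ if_pos hi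
  obtain ⟨j, hjA, hj⟩ := hmeet Aᶜ hAc fun i hi ↦ if_neg (mem_compl.1 hi)
  exact one_lt_card.2 ⟨i, hi, j, hj, fun hij ↦ mem_compl.1 hjA (hij ▸ hiA)⟩

namespace Game

variable {G : Game}

theorem not_covered_and_covered {s : G.Profile} {γ : G.Config} {j k : Fin G.n}
    (hjk : G.color j ≠ G.color k) {t : ℝ} (hj : t ∈ Set.Ico (s.start j) (s.start j + G.len j))
    (hk : t ∈ Set.Ico (s.start k) (s.start k + G.len k)) :
    ¬ (G.Covered s γ j ∧ G.Covered s γ k) := fun ⟨hcj, hck⟩ ↦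
  hjk ((hcj t hj.1 hj.2).symm.trans (hck t hk.1 hk.2))

theorem sum_utility (M : G.TieBreak) (s : G.Profile) : ∑ i, G.utility M i s = G.val s := by
  rw [← M.choice_opt s, profit]
  simp only [utility]
  rw [sum_comm]
  refine sum_congr rfl fun j _ ↦ ?_
  simp only [ite_and, sum_ite_eq, mem_univ, if_true]

end Game

/-- Jobs `0, …, n - 1` have lengths `a i`, job `n` is the long job and job `n + 1` the short
one. -/
noncomputable def partitionGame {n : ℕ} (a : Fin n → ℕ) (T : ℕ) (ε : ℝ) (hT : 0 < T)
    (haT : ∀ i, a i ≤ T) (hε : 0 < ε) : Game where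
  n := n + 2
  c := 2
  T := T
  T_pos := Nat.cast_pos.2 hT
  color := Fin.lastCases 1 fun _ ↦ 0
  len := Fin.lastCases (1 / n) (Fin.lastCases T fun i ↦ a i)
  wt := Fin.lastCases 3 (Fin.lastCases (1 + ε) fun _ ↦ 1)
  len_nonneg := Fin.lastCases (by simp) (Fin.lastCases (by simp) fun i ↦ by simp)
  len_le_T := Fin.lastCases
    (by simpa using (Nat.cast_inv_le_one n).trans (Nat.one_le_cast.2 hT))
    (Fin.lastCases (by simp) fun i ↦ by simpa using haT i)
  wt_nonneg := Fin.lastCases (by simp) (Fin.lastCases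
    (by simp only [Fin.lastCases_castSucc, Fin.lastCases_last]; linarith) fun i ↦ by simp)

namespace PartitionGame

variable {n T : ℕ} {a : Fin n → ℕ} {ε : ℝ} {hT : 0 < T} {haT : ∀ i, a i ≤ T} {hε : 0 < ε}

local notation "𝒢" => partitionGame a T ε hT haT hε

/- Job and player indices are typed in `(𝒢).n` and `(𝒢).c`, not `n + 2` and `2`, so that
rewriting inside sums over the jobs of `𝒢` is type correct. -/

def small (i : Fin n) : Fin (𝒢).n := (i.castSucc.castSucc : Fin (n + 2))

def long : Fin (𝒢).n := ((Fin.last n).castSucc : Fin (n + 2))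

def short : Fin (𝒢).n := (Fin.last (n + 1) : Fin (n + 2))

def first : Fin (𝒢).c := (0 : Fin 2)

def second : Fin (𝒢).c := (1 : Fin 2)

theorem sum_jobs {M : Type*} [AddCommMonoid M] (f : Fin (𝒢).n → M) :
    ∑ j, f j = ∑ i, f (small i) + f long + f short :=
  (Fin.sum_univ_castSucc (n := n + 1) f).trans
    (congrArg (· + f short) (Fin.sum_univ_castSucc (n := n) _))

theorem forall_job {P : Fin (𝒢).n → Prop} :
    (∀ j, P j) ↔ (∀ i, P (small i)) ∧ P long ∧ P short := by
  refine ⟨fun h ↦ ⟨fun i ↦ h _, h _, h _⟩, fun ⟨hs, hl, hsh⟩ ↦ ?_⟩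
  show ∀ j : Fin (n + 2), P j
  intro j
  induction j using Fin.lastCases with
  | last => exact hsh
  | cast j =>
    induction j using Fin.lastCases with
    | last => exact hl
    | cast i => exact hs i

theorem first_ne_second : (first : Fin (𝒢).c) ≠ second := by
  show (0 : Fin 2) ≠ 1
  decide

theorem eq_first_or_eq_second (i : Fin (𝒢).c) : i = first ∨ i = second := by
  revert i
  show ∀ i : Fin 2, i = 0 ∨ i = 1
  decide

@[simp] theorem T_eq : (𝒢).T = T := rfl

@[simp] theorem color_small (i : Fin n) : (𝒢).color (small i) = first := by
  simp [partitionGame, small, first]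

@[simp] theorem color_long : (𝒢).color long = first := by
  simp [partitionGame, long, first]

@[simp] theorem color_short : (𝒢).color short = second := by
  simp [partitionGame, short, second]

@[simp] theorem len_small (i : Fin n) : (𝒢).len (small i) = a i := by
  simp [partitionGame, small]

@[simp] theorem len_long : (𝒢).len long = T := by
  simp [partitionGame, long]

@[simp] theorem len_short : (𝒢).len short = 1 / n := by
  simp [partitionGame, short]

@[simp] theorem wt_small (i : Fin n) : (𝒢).wt (small i) = 1 := by
  simp [partitionGame, small]

@[simp] theorem wt_long : (𝒢).wt long = 1 + ε := by
  simp [partitionGame, long]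

@[simp] theorem wt_short : (𝒢).wt short = 3 := by
  simp [partitionGame, short]

theorem start_long (s : (𝒢).Profile) : s.start long = 0 := by
  have := s.start_le long
  simp only [len_long, T_eq] at this
  linarith [s.start_nonneg long]

theorem start_short_add_le (s : (𝒢).Profile) : s.start short + 1 / n ≤ T := by
  simpa using s.start_le short

def smallStarts (s : (𝒢).Profile) (i : Fin n) : ℝ := s.start (small i)

noncomputable def conflicts (s : (𝒢).Profile) : Finset (Fin n) :=
  overlaps a (smallStarts s) (s.start short)

theorem profit_eq (s : (𝒢).Profile) (γ : (𝒢).Config) :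
    (𝒢).profit s γ = #{i | (𝒢).Covered s γ (small i)} +
      (if (𝒢).Covered s γ long then 1 + ε else 0) + (if (𝒢).Covered s γ short then 3 else 0) := by
  rw [Game.profit, sum_jobs, natCast_card_filter]
  simp only [wt_small, wt_long, wt_short]

theorem not_covered_long_and_short (hn : 0 < n) (s : (𝒢).Profile) (γ : (𝒢).Config) :
    ¬ ((𝒢).Covered s γ long ∧ (𝒢).Covered s γ short) := by
  have : (0 : ℝ) < 1 / n := by positivity
  have := start_short_add_le s
  refine Game.not_covered_and_covered (t := s.start short)
    (by rw [color_long, color_short]; exact first_ne_second) ?_ ?_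
  · simp only [start_long, len_long, zero_add, Set.mem_Ico]
    exact ⟨s.start_nonneg short, by linarith⟩
  · simp only [len_short, Set.mem_Ico]
    exact ⟨le_rfl, by linarith⟩

theorem not_covered_small_and_short (hn : 0 < n) (ha : ∀ i, 0 < a i) (s : (𝒢).Profile)
    (γ : (𝒢).Config) {i : Fin n} (hi : i ∈ conflicts s) :
    ¬ ((𝒢).Covered s γ (small i) ∧ (𝒢).Covered s γ short) := by
  have : (0 : ℝ) < 1 / n := by positivity
  have : (0 : ℝ) < a i := by exact_mod_cast ha i
  rw [conflicts, mem_overlaps] at hi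
  refine Game.not_covered_and_covered (t := max (s.start (small i)) (s.start short))
    (by rw [color_small, color_short]; exact first_ne_second) ?_ ?_
  · simp only [len_small, Set.mem_Ico, le_max_left, max_lt_iff, true_and]
    exact ⟨by linarith, hi.1⟩
  · simp only [len_short, Set.mem_Ico, le_max_right, max_lt_iff, true_and]
    exact ⟨hi.2, by linarith⟩

theorem profit_le_of_not_covered_short {s : (𝒢).Profile} {γ : (𝒢).Config}
    (h : ¬ (𝒢).Covered s γ short) : (𝒢).profit s γ ≤ n + 1 + ε := by
  have hcard : (#{i | (𝒢).Covered s γ (small i)} : ℝ) ≤ n := by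
    exact_mod_cast (card_le_univ _).trans_eq (Fintype.card_fin n)
  rw [profit_eq, if_neg h]
  split_ifs <;> linarith

theorem profit_le_of_covered_short (hn : 0 < n) (ha : ∀ i, 0 < a i) {s : (𝒢).Profile}
    {γ : (𝒢).Config} (h : (𝒢).Covered s γ short) :
    (𝒢).profit s γ ≤ n + 3 - #(conflicts s) := by
  have hdisj : Disjoint ({i | (𝒢).Covered s γ (small i)} : Finset (Fin n)) (conflicts s) :=
    disjoint_left.2 fun i hi hc ↦
      not_covered_small_and_short hn ha s γ hc ⟨(mem_filter.1 hi).2, h⟩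
  have hcard : #{i | (𝒢).Covered s γ (small i)} + #(conflicts s) ≤ n := by
    rw [← card_union_of_disjoint hdisj]
    exact (card_le_univ _).trans_eq (Fintype.card_fin n)
  have hcard' : (#{i | (𝒢).Covered s γ (small i)} : ℝ) + #(conflicts s) ≤ n := by
    exact_mod_cast hcard
  rw [profit_eq, if_pos h, if_neg fun hl ↦ not_covered_long_and_short hn s γ ⟨hl, h⟩]
  linarith

theorem profit_const_first (hn : 0 < n) (s : (𝒢).Profile) :
    (𝒢).profit s (fun _ ↦ first) = n + 1 + ε := by
  have hshort : ¬ (𝒢).Covered s (fun _ ↦ first) short := fun h ↦ by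
    have : (0 : ℝ) < 1 / n := by positivity
    have := h (s.start short) le_rfl (by rw [len_short]; linarith)
    rw [color_short] at this
    exact first_ne_second this
  have hlong : (𝒢).Covered s (fun _ ↦ first) long := fun _ _ _ ↦ color_long.symm
  rw [profit_eq, if_pos hlong, if_neg hshort,
    filter_true_of_mem fun i _ _ _ _ ↦ (color_small i).symm, card_univ, Fintype.card_fin]
  ring

theorem le_profit_short_window (s : (𝒢).Profile) :
    n + 3 - #(conflicts s) ≤ (𝒢).profit s
      (fun t ↦ if t ∈ Set.Ico (s.start short) (s.start short + 1 / n) then second else first) := by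
  set γ : (𝒢).Config :=
    fun t ↦ if t ∈ Set.Ico (s.start short) (s.start short + 1 / n) then second else first
  have hshort : (𝒢).Covered s γ short := fun t h1 h2 ↦ by
    rw [len_short] at h2
    simp only [γ, if_pos (Set.mem_Ico.2 ⟨h1, h2⟩), color_short]
  have hsmall : (conflicts s)ᶜ ⊆ ({i | (𝒢).Covered s γ (small i)} : Finset (Fin n)) := by
    intro i hi
    rw [mem_compl, conflicts, mem_overlaps] at hi
    refine mem_filter.2 ⟨mem_univ i, fun t h1 h2 ↦ ?_⟩
    rw [len_small] at h2
    have : t ∉ Set.Ico (s.start short) (s.start short + 1 / n) := fun ht ↦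
      hi ⟨ht.1.trans_lt h2, h1.trans_lt ht.2⟩
    simp only [γ, if_neg this, color_small]
  have hcard : (n : ℝ) ≤ #{i | (𝒢).Covered s γ (small i)} + #(conflicts s) := by
    have := card_le_card hsmall
    rw [card_compl, Fintype.card_fin] at this
    have := card_le_univ (conflicts s)
    rw [Fintype.card_fin] at this
    exact_mod_cast (by omega : n ≤ _ + #(conflicts s))
  rw [profit_eq, if_pos hshort]
  split_ifs <;> linarith

theorem val_eq (hn : 0 < n) (ha : ∀ i, 0 < a i) (s : (𝒢).Profile) :
    (𝒢).val s = max (n + 1 + ε) (n + 3 - #(conflicts s)) := by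
  have hub : ∀ x ∈ {x | ∃ γ : (𝒢).Config, x = (𝒢).profit s γ},
      x ≤ max (n + 1 + ε) (n + 3 - #(conflicts s)) := by
    rintro _ ⟨γ, rfl⟩
    by_cases h : (𝒢).Covered s γ short
    · exact (profit_le_of_covered_short hn ha h).trans (le_max_right _ _)
    · exact (profit_le_of_not_covered_short h).trans (le_max_left _ _)
  refine le_antisymm (csSup_le ⟨_, fun _ ↦ first, rfl⟩ hub) (max_le ?_ ?_)
  · exact le_csSup_of_le ⟨_, hub⟩ ⟨fun _ ↦ first, rfl⟩ (profit_const_first hn s).ge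
  · exact le_csSup_of_le ⟨_, hub⟩ ⟨_, rfl⟩ (le_profit_short_window s)

theorem utility_second (M : (𝒢).TieBreak) (s : (𝒢).Profile) :
    (𝒢).utility M second s = if (𝒢).Covered s (M.choice s) short then 3 else 0 := by
  simp [Game.utility, sum_jobs, first_ne_second]

theorem utility_first_add_utility_second (M : (𝒢).TieBreak) (s : (𝒢).Profile) :
    (𝒢).utility M first s + (𝒢).utility M second s = (𝒢).val s := by
  rw [← Game.sum_utility M s, Fintype.sum_eq_add first second first_ne_second]
  rintro i ⟨h1, h2⟩
  exact ((eq_first_or_eq_second i).elim h1 h2).elim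

theorem utility_of_two_le_card (hn : 0 < n) (ha : ∀ i, 0 < a i) (M : (𝒢).TieBreak)
    (s : (𝒢).Profile) (h : 2 ≤ #(conflicts s)) :
    (𝒢).utility M first s = n + 1 + ε ∧ (𝒢).utility M second s = 0 := by
  have hK : (2 : ℝ) ≤ #(conflicts s) := by exact_mod_cast h
  have hval : (𝒢).val s = n + 1 + ε := by rw [val_eq hn ha, max_eq_left (by linarith)]
  have hshort : ¬ (𝒢).Covered s (M.choice s) short := fun hc ↦ by
    have := profit_le_of_covered_short hn ha hc
    rw [M.choice_opt, hval] at this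
    linarith
  have h2 : (𝒢).utility M second s = 0 := by rw [utility_second, if_neg hshort]
  exact ⟨by linarith [utility_first_add_utility_second M s], h2⟩

theorem utility_of_card_le_one (hn : 0 < n) (ha : ∀ i, 0 < a i) (hε1 : ε < 1)
    (M : (𝒢).TieBreak) (s : (𝒢).Profile) (h : #(conflicts s) ≤ 1) :
    (𝒢).utility M first s ≤ n ∧ (𝒢).utility M second s = 3 := by
  have hK : (#(conflicts s) : ℝ) ≤ 1 := by exact_mod_cast h
  have hval : (𝒢).val s = n + 3 - #(conflicts s) := by
    rw [val_eq hn ha, max_eq_right (by linarith)]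
  have hshort : (𝒢).Covered s (M.choice s) short := by
    by_contra hc
    have := profit_le_of_not_covered_short hc
    rw [M.choice_opt, hval] at this
    linarith
  have h2 : (𝒢).utility M second s = 3 := by rw [utility_second, if_pos hshort]
  have : (0 : ℝ) ≤ #(conflicts s) := Nat.cast_nonneg _
  exact ⟨by linarith [utility_first_add_utility_second M s], h2⟩

theorem smallStarts_nonneg_and_add_le (s : (𝒢).Profile) (i : Fin n) :
    0 ≤ smallStarts s i ∧ smallStarts s i + a i ≤ T := by
  simpa [smallStarts] using And.intro (s.start_nonneg (small i)) (s.start_le (small i))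

noncomputable def profileOf (σ : Fin n → ℝ) (hσ : ∀ i, 0 ≤ σ i ∧ σ i + a i ≤ T) (t : ℝ)
    (ht : 0 ≤ t ∧ t + 1 / n ≤ T) : (𝒢).Profile where
  start := fun j : Fin (n + 2) ↦ Fin.lastCases t (Fin.lastCases 0 σ) j
  start_nonneg := forall_job.2 ⟨fun i ↦ by simpa [small] using (hσ i).1,
    by simp [long], by simpa [short] using ht.1⟩
  start_le := forall_job.2 ⟨fun i ↦ by rw [len_small]; simpa [small] using (hσ i).2,
    by rw [len_long]; simp [long], by rw [len_short]; simpa [short] using ht.2⟩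

section profileOf

variable {σ : Fin n → ℝ} {hσ : ∀ i, 0 ≤ σ i ∧ σ i + a i ≤ T} {t : ℝ} {ht : 0 ≤ t ∧ t + 1 / n ≤ T}

@[simp] theorem smallStarts_profileOf : smallStarts (profileOf σ hσ t ht : (𝒢).Profile) = σ := by
  funext i
  simp [smallStarts, profileOf, small]

@[simp] theorem profileOf_start_long : (profileOf σ hσ t ht : (𝒢).Profile).start long = 0 := by
  simp [profileOf, long]

@[simp] theorem profileOf_start_short : (profileOf σ hσ t ht : (𝒢).Profile).start short = t := by
  simp [profileOf, short]

end profileOf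

theorem exists_deviation_first_conflicts_eq_univ (hn : 0 < n) (ha : ∀ i, 0 < a i)
    (s : (𝒢).Profile) : ∃ s' : (𝒢).Profile,
      (∀ j, (𝒢).color j ≠ first → s'.start j = s.start j) ∧ conflicts s' = univ := by
  set p := s.start short
  have hp : 0 ≤ p ∧ p + 1 / n ≤ T := ⟨s.start_nonneg _, start_short_add_le s⟩
  have hpT : p < T := by linarith [show (0 : ℝ) < 1 / n by positivity]
  have haT' : ∀ i, (a i : ℝ) ≤ T := fun i ↦ by exact_mod_cast haT i
  have ha' : ∀ i, (0 : ℝ) < a i := fun i ↦ by exact_mod_cast ha i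
  refine ⟨profileOf (fun i ↦ min p (T - a i)) (fun i ↦ ⟨?_, ?_⟩) p hp, ?_, ?_⟩
  · exact le_min hp.1 (by linarith [haT' i])
  · linarith [min_le_right p (T - a i)]
  · refine forall_job.2 ⟨fun i h ↦ absurd (color_small i) h, fun h ↦ absurd color_long h,
      fun _ ↦ profileOf_start_short⟩
  · refine eq_univ_of_forall fun i ↦ ?_
    rw [conflicts, smallStarts_profileOf, profileOf_start_short, mem_overlaps]
    refine ⟨?_, (min_le_left _ _).trans_lt (by linarith [show (0 : ℝ) < 1 / n by positivity])⟩
    rcases min_choice p (T - a i) with h | h <;> rw [h] <;> linarith [ha' i]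

theorem blocks_of_isNE (hn : 2 ≤ n) (ha : ∀ i, 0 < a i) (hε1 : ε < 1) {M : (𝒢).TieBreak}
    {s : (𝒢).Profile} (hs : (𝒢).IsNE M s) : Blocks a T (smallStarts s) := by
  have hn0 : 0 < n := by omega
  have hK : 2 ≤ #(conflicts s) := by
    by_contra! hK
    obtain ⟨s', hs', hK'⟩ := exists_deviation_first_conflicts_eq_univ hn0 ha s
    have h1 := (utility_of_card_le_one hn0 ha hε1 M s (by omega)).1
    have h2 := (utility_of_two_le_card hn0 ha M s'
      (by rw [hK', card_univ, Fintype.card_fin]; exact hn)).1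
    linarith [hs first s' hs']
  intro t ht0 htT
  by_contra! ht
  let s' : (𝒢).Profile := profileOf (smallStarts s) (smallStarts_nonneg_and_add_le s) t ⟨ht0, htT⟩
  have hs' : ∀ j, (𝒢).color j ≠ second → s'.start j = s.start j :=
    forall_job.2 ⟨fun i _ ↦ congrFun smallStarts_profileOf i,
      fun _ ↦ profileOf_start_long.trans (start_long s).symm,
      fun h ↦ absurd color_short h⟩
  have hK' : #(conflicts s') ≤ 1 := by
    rw [conflicts, smallStarts_profileOf, profileOf_start_short]
    omega
  have h1 := (utility_of_card_le_one hn0 ha hε1 M s' hK').2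
  have h2 := (utility_of_two_le_card hn0 ha M s hK).2
  linarith [hs second s' hs']

theorem exists_isNE_of_blocks (hn : 0 < n) (ha : ∀ i, 0 < a i) (hε1 : ε < 1)
    (M : (𝒢).TieBreak) {σ : Fin n → ℝ} (hσ : ∀ i, 0 ≤ σ i ∧ σ i + a i ≤ T)
    (hb : Blocks a T σ) : ∃ s : (𝒢).Profile, (𝒢).IsNE M s := by
  have h0 : (0 : ℝ) + 1 / n ≤ T := by
    rw [zero_add, one_div]
    exact (Nat.cast_inv_le_one n).trans (Nat.one_le_cast.2 hT)
  let s : (𝒢).Profile := profileOf σ hσ 0 ⟨le_rfl, h0⟩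
  have hK : 2 ≤ #(conflicts s) := by
    simpa [conflicts, s] using hb 0 le_rfl h0
  refine ⟨s, fun i s' hs' ↦ ?_⟩
  rcases eq_first_or_eq_second i with rfl | rfl
  · rw [(utility_of_two_le_card hn ha M s hK).1]
    rcases le_or_gt 2 #(conflicts s') with h | h
    · exact (utility_of_two_le_card hn ha M s' h).1.le
    · linarith [(utility_of_card_le_one hn ha hε1 M s' (by omega)).1]
  · have hσ' : smallStarts s' = σ := funext fun i ↦
      (hs' (small i) (by rw [color_small]; exact first_ne_second)).trans
        (congrFun smallStarts_profileOf i)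
    have hK' : 2 ≤ #(conflicts s') := by
      rw [conflicts, hσ']
      exact hb _ (s'.start_nonneg _) (start_short_add_le s')
    rw [(utility_of_two_le_card hn ha M s' hK').2, (utility_of_two_le_card hn ha M s hK).2]

end PartitionGame

theorem Game.eq_partitionGame {n T : ℕ} {a : Fin n → ℕ} {ε : ℝ} (hT : 0 < T)
    (haT : ∀ i, a i ≤ T) (hε : 0 < ε) {G : Game} (hn : G.n = n + 2) (hc : G.c = 2)
    (hTG : G.T = (T : ℝ))
    (hcol : ∀ j : Fin G.n, (G.color j : ℕ) = if (j : ℕ) = n + 1 then 1 else 0)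
    (hlen : ∀ j : Fin G.n, G.len j =
      if h : (j : ℕ) < n then (a ⟨(j : ℕ), h⟩ : ℝ)
      else if (j : ℕ) = n then (T : ℝ) else 1 / (n : ℝ))
    (hwt : ∀ j : Fin G.n, G.wt j =
      if (j : ℕ) < n then 1 else if (j : ℕ) = n then 1 + ε else 3) :
    G = partitionGame a T ε hT haT hε := by
  obtain ⟨N, C, T', _, col, len, wt, _, _, _⟩ := G
  dsimp only at hn hc hTG
  subst hn hc hTG
  dsimp only at hcol hlen hwt
  have hcol' : col = Fin.lastCases 1 fun _ ↦ 0 := by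
    funext j
    apply Fin.ext
    rw [hcol j]
    induction j using Fin.lastCases with
    | last => simp
    | cast j => simp [j.isLt.ne]
  have hlen' : len = Fin.lastCases (1 / n) (Fin.lastCases T fun i ↦ a i) := by
    funext j
    rw [hlen j]
    induction j using Fin.lastCases with
    | last => simp
    | cast j =>
      induction j using Fin.lastCases with
      | last => simp
      | cast i => simp
  have hwt' : wt = Fin.lastCases 3 (Fin.lastCases (1 + ε) fun _ ↦ 1) := by
    funext j
    rw [hwt j]
    induction j using Fin.lastCases with
    | last => simp
    | cast j =>
      induction j using Fin.lastCases with
      | last => simp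
      | cast i => simp
  subst hcol' hlen' hwt'
  rfl

/-- Reduction from Partition: the 2-color game with horizon `T`, in which player 1
has jobs of lengths `a 1, …, a n` (weight 1 each) and one job of length `T`
(weight `1 + ε`), and player 2 has one job of length `1/n` and weight `3`, has a
Nash equilibrium with respect to any tie-breaking rule iff a subset of the `a i`
sums to `T`. -/
theorem NE_iff_partition (n : ℕ) (a : Fin n → ℕ) (ha : ∀ i, 0 < a i) (T : ℕ)
    (hsum : ∑ i, a i = 2 * T) (haT : ∀ i, a i ≤ T)
    (ε : ℝ) (hε1 : 0 < ε) (hε2 : ε < 1)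
    (G : Game) (hn : G.n = n + 2) (hc : G.c = 2) (hT : G.T = (T : ℝ))
    (hcol : ∀ j : Fin G.n, (G.color j : ℕ) = if (j : ℕ) = n + 1 then 1 else 0)
    (hlen : ∀ j : Fin G.n, G.len j =
      if h : (j : ℕ) < n then (a ⟨(j : ℕ), h⟩ : ℝ)
      else if (j : ℕ) = n then (T : ℝ) else 1 / (n : ℝ))
    (hwt : ∀ j : Fin G.n, G.wt j =
      if (j : ℕ) < n then 1 else if (j : ℕ) = n then 1 + ε else 3) :
    ∀ M : G.TieBreak,
      ((∃ s : G.Profile, G.IsNE M s) ↔ ∃ A : Finset (Fin n), ∑ i ∈ A, a i = T) := by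
  have hT0 : 0 < T := by exact_mod_cast hT ▸ G.T_pos
  obtain rfl := G.eq_partitionGame hT0 haT hε1 hn hc hT hcol hlen hwt
  have hn2 : 2 ≤ n := by
    have : 2 * T ≤ n * T := by simpa [hsum] using sum_le_sum fun i (_ : i ∈ univ) ↦ haT i
    exact Nat.le_of_mul_le_mul_right this hT0
  intro M
  constructor
  · rintro ⟨s, hs⟩
    exact exists_sum_eq_of_blocks hsum (fun i ↦ (PartitionGame.smallStarts_nonneg_and_add_le s i).1)
      (PartitionGame.blocks_of_isNE hn2 ha hε2 hs)
  · rintro ⟨A, hA⟩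
    obtain ⟨σ, hσ, hb⟩ := exists_blocks_of_sum_eq (by omega) hsum hA
    exact PartitionGame.exists_isNE_of_blocks (by omega) ha hε2 M hσ hb
end
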